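/- arXiv:math/0601315 — 6 statements merged into one kernel-verified Lean document; each statement's English description precedes it below -/
import Mathlib

section
/- Let (X_i) be a finite sequence of real numbers, S_j = X_1 + ... + X_j, M_n = max_{1≤i≤n} |S_i|, M_n^+ = max(0, S_1, ..., S_n), M_n^- = max(0, -S_1, ..., -S_n), and D_k = (M_k^+ - M_{k-1}^+) - (M_k^- - M_{k-1}^-). Then (M_n)^2 ≤ 4(S_n)^2 - 4 ∑_{k=1}^{n-1} D_k (S_n - S_k). -/
/-!
Write `a = M⁺ₙ`, `b = M⁻ₙ`, `s = Sₙ`. The running maximum `M⁺` can only increase at a time `k`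
where it equals `Sₖ`, so `(M⁺ₖ - M⁺ₖ₋₁) Sₖ = (M⁺ₖ - M⁺ₖ₋₁) M⁺ₖ ≥ ((M⁺ₖ)² - (M⁺ₖ₋₁)²) / 2`, and
likewise for `M⁻`. Summing, `T := ∑ₖ Dₖ Sₖ ≥ (a² + b²) / 2`, while `∑ₖ Dₖ = a - b` telescopes.
Hence the right-hand side equals `4s² - 4s(a - b) + 4T ≥ (2s - a + b)² + (a + b)² ≥ max(a, b)²`,
and `Mₙ = max(a, b)`. Here `M⁺ = runningMax S` and `M⁻ = runningMax (-S)`: the index `0`, where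
`S₀ = 0`, supplies the `0` in `max(0, S₁, …, Sₙ)`.
-/

open Finset

def runningMax {α : Type*} [SemilatticeSup α] (f : ℕ → α) (m : ℕ) : α :=
  (range (m + 1)).sup' ⟨0, by simp⟩ f

section runningMax

variable {α : Type*} [SemilatticeSup α] (f : ℕ → α)

@[simp]
theorem runningMax_zero : runningMax f 0 = f 0 := by
  simp [runningMax]

theorem runningMax_succ (m : ℕ) : runningMax f (m + 1) = f (m + 1) ⊔ runningMax f m := by
  simp only [runningMax, range_add_one (n := m + 1)]
  exact sup'_insert _ f

theorem le_runningMax_of_le {i m : ℕ} (h : i ≤ m) : f i ≤ runningMax f m :=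
  le_sup' f (mem_range_succ_iff.mpr h)

theorem runningMax_sup (g : ℕ → α) (m : ℕ) :
    runningMax (f ⊔ g) m = runningMax f m ⊔ runningMax g m := by
  induction m with
  | zero => simp
  | succ m ih => rw [runningMax_succ, ih, runningMax_succ, runningMax_succ, Pi.sup_apply,
      sup_sup_sup_comm]

end runningMax

theorem runningMax_abs {α : Type*} [Lattice α] [AddGroup α] (f : ℕ → α) (m : ℕ) :
    runningMax (fun i => |f i|) m = runningMax f m ⊔ runningMax (fun i => -f i) m :=
  runningMax_sup f (fun i => -f i) m

theorem runningMax_increment_mul (f : ℕ → ℝ) (m : ℕ) :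
    (runningMax f (m + 1) - runningMax f m) * f (m + 1) =
      (runningMax f (m + 1) - runningMax f m) * runningMax f (m + 1) := by
  rcases le_total (f (m + 1)) (runningMax f m) with h | h
  · rw [runningMax_succ, sup_of_le_right h, sub_self, zero_mul, zero_mul]
  · rw [runningMax_succ, sup_of_le_left h]

section Telescoping

variable (R : ℕ → ℝ)

theorem sum_Icc_sub_pred (m : ℕ) : ∑ k ∈ Icc 1 m, (R k - R (k - 1)) = R m - R 0 := by
  induction m with
  | zero => simp
  | succ m ih =>
    rw [sum_Icc_succ_top (Nat.le_add_left 1 m), ih, Nat.add_sub_cancel]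
    ring

theorem sq_sub_sq_le_two_mul_sum_sub_pred_mul (m : ℕ) :
    R m ^ 2 - R 0 ^ 2 ≤ 2 * ∑ k ∈ Icc 1 m, (R k - R (k - 1)) * R k := by
  induction m with
  | zero => simp
  | succ m ih =>
    rw [sum_Icc_succ_top (Nat.le_add_left 1 m), Nat.add_sub_cancel]
    nlinarith [sq_nonneg (R (m + 1) - R m)]

end Telescoping

theorem sq_runningMax_sub_sq_le (f : ℕ → ℝ) (m : ℕ) :
    runningMax f m ^ 2 - f 0 ^ 2 ≤
      2 * ∑ k ∈ Icc 1 m, (runningMax f k - runningMax f (k - 1)) * f k := by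
  have hsum : ∑ k ∈ Icc 1 m, (runningMax f k - runningMax f (k - 1)) * f k =
      ∑ k ∈ Icc 1 m, (runningMax f k - runningMax f (k - 1)) * runningMax f k := by
    refine sum_congr rfl fun k hk => ?_
    obtain ⟨j, rfl⟩ : ∃ j, k = j + 1 := ⟨k - 1, by grind⟩
    exact runningMax_increment_mul f j
  simpa [hsum] using sq_sub_sq_le_two_mul_sum_sub_pred_mul (runningMax f) m

theorem sq_runningMax_abs_le (S : ℕ → ℝ) (hS0 : S 0 = 0) (n : ℕ) :
    runningMax (fun i => |S i|) n ^ 2 ≤ 4 * S n ^ 2 - 4 * ∑ k ∈ Icc 1 n,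
      ((runningMax S k - runningMax S (k - 1)) -
        (runningMax (fun i => -S i) k - runningMax (fun i => -S i) (k - 1))) * (S n - S k) := by
  set P := runningMax S
  set N := runningMax (fun i => -S i)
  set T := ∑ k ∈ Icc 1 n, ((P k - P (k - 1)) - (N k - N (k - 1))) * S k
  have hP : 0 ≤ P n := hS0 ▸ le_runningMax_of_le S (Nat.zero_le n)
  have hN : 0 ≤ N n := by simpa [hS0] using le_runningMax_of_le (fun i => -S i) (Nat.zero_le n)
  have hT : P n ^ 2 + N n ^ 2 ≤ 2 * T := by
    have hPT : P n ^ 2 ≤ 2 * ∑ k ∈ Icc 1 n, (P k - P (k - 1)) * S k := by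
      simpa [hS0] using sq_runningMax_sub_sq_le S n
    have hNT : N n ^ 2 ≤ -(2 * ∑ k ∈ Icc 1 n, (N k - N (k - 1)) * S k) := by
      simpa [hS0] using sq_runningMax_sub_sq_le (fun i => -S i) n
    have hTsplit : T = ∑ k ∈ Icc 1 n, (P k - P (k - 1)) * S k -
        ∑ k ∈ Icc 1 n, (N k - N (k - 1)) * S k := by
      simp only [T, ← sum_sub_distrib, sub_mul]
    linarith
  have hsum : ∑ k ∈ Icc 1 n, ((P k - P (k - 1)) - (N k - N (k - 1))) * (S n - S k) =
      (P n - N n) * S n - T := by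
    have := sum_Icc_sub_pred (fun k => P k - N k) n
    simp only [P, N, runningMax_zero, hS0, neg_zero, sub_zero] at this
    rw [← this, sum_mul, ← sum_sub_distrib]
    exact sum_congr rfl fun k _ => by ring
  rw [hsum, runningMax_abs]
  calc max (P n) (N n) ^ 2 ≤ (P n + N n) ^ 2 := by
        gcongr
        exact max_le (le_add_of_nonneg_right hN) (le_add_of_nonneg_left hP)
    _ ≤ (2 * S n - P n + N n) ^ 2 + (P n + N n) ^ 2 := le_add_of_nonneg_left (sq_nonneg _)
    _ ≤ 4 * S n ^ 2 - 4 * ((P n - N n) * S n - T) := by linarith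

/-- Deterministic maximal inequality (Peligrad–Utev / Dedecker–Rio):
for real numbers `X 1, ..., X n` with partial sums `S`, maxima `M`, `Mp`, `Mm`
and increments `D`, one has `(M n)^2 ≤ 4 (S n)^2 - 4 ∑_{k=1}^{n-1} D k (S n - S k)`. -/
theorem stmt0 (n : ℕ) (X S Mp Mm M D : ℕ → ℝ)
    (hS : ∀ j, S j = ∑ i ∈ Finset.Icc 1 j, X i)
    (hMp : ∀ m, Mp m = (Finset.range (m + 1)).sup' ⟨0, by simp⟩ (fun i => S i))
    (hMm : ∀ m, Mm m = (Finset.range (m + 1)).sup' ⟨0, by simp⟩ (fun i => -S i))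
    (hM : ∀ m, M m = (Finset.range (m + 1)).sup' ⟨0, by simp⟩ (fun i => |S i|))
    (hD : ∀ k, 1 ≤ k → D k = (Mp k - Mp (k - 1)) - (Mm k - Mm (k - 1))) :
    (M n) ^ 2 ≤ 4 * (S n) ^ 2 - 4 * ∑ k ∈ Finset.Icc 1 (n - 1), D k * (S n - S k) := by
  have hS0 : S 0 = 0 := by simp [hS]
  have hlast : ∑ k ∈ Icc 1 (n - 1), D k * (S n - S k) = ∑ k ∈ Icc 1 n, D k * (S n - S k) := by
    cases n with
    | zero => rfl
    | succ m =>
      rw [sum_Icc_succ_top (Nat.le_add_left 1 m), Nat.add_sub_cancel, sub_self, mul_zero, add_zero]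
  have hD' : ∀ k ∈ Icc 1 n, D k * (S n - S k) = ((runningMax S k - runningMax S (k - 1)) -
      (runningMax (fun i => -S i) k - runningMax (fun i => -S i) (k - 1))) * (S n - S k) :=
    fun k hk => by rw [hD k (mem_Icc.1 hk).1, hMp, hMp, hMm, hMm]; rfl
  rw [hM, hlast, sum_congr rfl hD']
  exact sq_runningMax_abs_le S hS0 n
end

section
/- Let (X_i)_{1≤i≤n} be square-integrable random variables adapted to a nondecreasing filtration (F_i), S_j = ∑_{k=1}^j X_k and M_n = max_{1≤i≤n} |S_i|. Then E(M_n^2) ≤ 4 E(S_n^2) + 4 ∑_{k=1}^{n-1} E|X_k · E(S_n - S_k | F_k)|. -/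
open MeasureTheory Finset

private lemma l2_mul_integrable {Ω : Type*} {mΩ : MeasurableSpace Ω} {μ : Measure Ω}
    {f g : Ω → ℝ} (hf : MemLp f 2 μ) (hg : MemLp g 2 μ) :
    Integrable (fun ω => f ω * g ω) μ := by
  have h : MemLp (f • g) 1 μ := hg.smul hf (hpqr := ⟨by
    rw [ENNReal.inv_two_add_inv_two, inv_one]⟩)
  exact memLp_one_iff_integrable.mp h

private lemma sm_max {Ω : Type*} {m : MeasurableSpace Ω} {f g : Ω → ℝ}
    (hf : StronglyMeasurable[m] f) (hg : StronglyMeasurable[m] g) :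
    StronglyMeasurable[m] (fun ω => max (f ω) (g ω)) :=
  (hf.measurable.max hg.measurable).stronglyMeasurable

private lemma sm_abs {Ω : Type*} {m : MeasurableSpace Ω} {f : Ω → ℝ}
    (hf : StronglyMeasurable[m] f) :
    StronglyMeasurable[m] (fun ω => |f ω|) :=
  hf.measurable.abs.stronglyMeasurable

/-- Maximal inequality (Proposition 4): for square-integrable random variables adapted to a
nondecreasing filtration, `E(M_n²) ≤ 4 E(S_n²) + 4 ∑_{k=1}^{n-1} E|X_k E(S_n - S_k|F_k)|`. -/
theorem stmt1 {Ω : Type*} {mΩ : MeasurableSpace Ω} (μ : Measure Ω) [IsProbabilityMeasure μ]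
    (F : ℕ → MeasurableSpace Ω) (hFmono : Monotone F) (hFle : ∀ i, F i ≤ mΩ)
    (X : ℕ → Ω → ℝ) (hadapt : ∀ k, StronglyMeasurable[F k] (X k))
    (hX2 : ∀ k, MemLp (X k) 2 μ)
    (n : ℕ) (hn : 1 ≤ n)
    (S : ℕ → Ω → ℝ) (hS : ∀ j ω, S j ω = ∑ k ∈ Finset.Icc 1 j, X k ω)
    (M : Ω → ℝ)
    (hM : ∀ ω, M ω = (Finset.Icc 1 n).sup' ⟨1, by simp [hn]⟩ (fun i => |S i ω|)) :
    ∫ ω, (M ω) ^ 2 ∂μ ≤ 4 * ∫ ω, (S n ω) ^ 2 ∂μ +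
      4 * ∑ k ∈ Finset.Icc 1 (n - 1),
        ∫ ω, |X k ω * (μ[fun ω' => S n ω' - S k ω' | F k]) ω| ∂μ := by
  classical
  -- basic facts about S
  have hS0 : ∀ ω, S 0 ω = 0 := by intro ω; rw [hS]; simp
  have hSsucc : ∀ j ω, S (j + 1) ω = S j ω + X (j + 1) ω := by
    intro j ω
    rw [hS, hS, Finset.sum_Icc_succ_top (Nat.succ_le_succ (Nat.zero_le j))]
  -- the running maximum T
  set T : ℕ → Ω → ℝ :=
    fun j ω => (Finset.range (j + 1)).sup' Finset.nonempty_range_add_one (fun i => |S i ω|) with hTdef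
  have hT0 : ∀ ω, T 0 ω = 0 := by
    intro ω; simp [hTdef, hS0 ω]
  have hTsucc : ∀ j ω, T (j + 1) ω = max (T j ω) |S (j + 1) ω| := by
    intro j ω
    apply le_antisymm
    · apply Finset.sup'_le
      intro i hi
      rw [Finset.mem_range] at hi
      rcases Nat.lt_succ_iff_lt_or_eq.mp hi with h | h
      · exact le_trans (Finset.le_sup' (fun i => |S i ω|) (Finset.mem_range.mpr h))
          (le_max_left _ _)
      · subst h; exact le_max_right _ _
    · apply max_le
      · apply Finset.sup'_le
        intro i hi
        rw [Finset.mem_range] at hi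
        exact Finset.le_sup' (fun i => |S i ω|) (Finset.mem_range.mpr (by omega))
      · exact Finset.le_sup' (fun i => |S i ω|) (Finset.self_mem_range_succ (j + 1))
  have hSleT : ∀ j ω, |S j ω| ≤ T j ω :=
    fun j ω => Finset.le_sup' (fun i => |S i ω|) (Finset.self_mem_range_succ j)
  have hTnonneg : ∀ j ω, 0 ≤ T j ω := fun j ω => (abs_nonneg (S j ω)).trans (hSleT j ω)
  have hTmono : ∀ j ω, T j ω ≤ T (j + 1) ω := by
    intro j ω; rw [hTsucc]; exact le_max_left _ _
  have hΔX : ∀ j ω, T (j + 1) ω - T j ω ≤ |X (j + 1) ω| := by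
    intro j ω
    have h1 : |S (j + 1) ω| ≤ T j ω + |X (j + 1) ω| := by
      calc |S (j + 1) ω| = |S j ω + X (j + 1) ω| := by rw [hSsucc]
        _ ≤ |S j ω| + |X (j + 1) ω| := abs_add_le _ _
        _ ≤ T j ω + |X (j + 1) ω| := by linarith [hSleT j ω]
    have h2 : T (j + 1) ω ≤ T j ω + |X (j + 1) ω| := by
      rw [hTsucc]
      exact max_le (le_add_of_nonneg_right (abs_nonneg _)) h1
    linarith
  -- M = T n
  have hMT : ∀ ω, M ω = T n ω := by
    intro ω
    rw [hM]
    apply le_antisymm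
    · apply Finset.sup'_le
      intro i hi
      have hi' : i ∈ Finset.range (n + 1) := by
        simp only [Finset.mem_Icc] at hi
        simp only [Finset.mem_range]; omega
      exact Finset.le_sup' (fun i => |S i ω|) hi'
    · apply Finset.sup'_le
      intro i hi
      simp only [Finset.mem_range] at hi
      rcases Nat.eq_zero_or_pos i with h0 | h1
      · subst h0
        have h1mem : (1:ℕ) ∈ Finset.Icc 1 n := by simp [hn]
        calc |S 0 ω| = 0 := by rw [hS0]; simp
          _ ≤ |S 1 ω| := abs_nonneg _
          _ ≤ _ := Finset.le_sup' (fun i => |S i ω|) h1mem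
      · exact Finset.le_sup' (fun i => |S i ω|) (by simp only [Finset.mem_Icc]; omega)
  -- core pointwise inequality
  have hcore : ∀ ω, T n ω ^ 2 ≤ 2 * ∑ j ∈ Finset.Icc 1 n, |S j ω| * (T j ω - T (j - 1) ω) := by
    intro ω
    have key : ∀ m, T m ω ^ 2 ≤ 2 * ∑ j ∈ Finset.Icc 1 m, |S j ω| * (T j ω - T (j - 1) ω) := by
      intro m
      induction m with
      | zero => simp [hT0 ω]
      | succ m ih =>
        rw [Finset.sum_Icc_succ_top (Nat.succ_le_succ (Nat.zero_le m))]
        simp only [Nat.add_sub_cancel]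
        have hstep : T (m + 1) ω ^ 2 - T m ω ^ 2
            ≤ 2 * (|S (m + 1) ω| * (T (m + 1) ω - T m ω)) := by
          rcases le_total |S (m + 1) ω| (T m ω) with h | h
          · rw [hTsucc, max_eq_left h]; ring_nf; simp
          · have heq : T (m + 1) ω = |S (m + 1) ω| := by rw [hTsucc, max_eq_right h]
            nlinarith [hTnonneg m ω]
        linarith
    exact key n
  -- telescoping sum of increments
  have hΔsum : ∀ ω, ∑ j ∈ Finset.Icc 1 n, (T j ω - T (j - 1) ω) = T n ω := by
    intro ω
    have key : ∀ m, ∑ j ∈ Finset.Icc 1 m, (T j ω - T (j - 1) ω) = T m ω := by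
      intro m
      induction m with
      | zero => simp [hT0 ω]
      | succ m ih =>
        rw [Finset.sum_Icc_succ_top (Nat.succ_le_succ (Nat.zero_le m)), ih]
        simp only [Nat.add_sub_cancel]
        ring
    exact key n
  -- integrability and measurability
  have hXint : ∀ k, Integrable (X k) μ := fun k => (hX2 k).integrable one_le_two
  have hSfun : ∀ j, S j = fun ω => ∑ k ∈ Finset.Icc 1 j, X k ω := fun j => funext (hS j)
  have hSmem : ∀ j, MemLp (S j) 2 μ := by
    intro j
    rw [hSfun j]
    exact memLp_finset_sum _ fun k _ => hX2 k
  have hSint : ∀ j, Integrable (S j) μ := fun j => (hSmem j).integrable one_le_two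
  have hSsm : ∀ j, StronglyMeasurable[F j] (S j) := by
    intro j
    rw [hSfun j]
    exact Finset.stronglyMeasurable_fun_sum _ fun k hk =>
      (hadapt k).mono (hFmono (Finset.mem_Icc.mp hk).2)
  have hTmem : ∀ j, MemLp (T j) 2 μ := by
    intro j
    induction j with
    | zero =>
      have h0 : T 0 = fun _ => (0:ℝ) := funext hT0
      rw [h0]; exact memLp_const 0
    | succ j ih =>
      have h1 : T (j + 1) = T j ⊔ fun ω => |S (j + 1) ω| := by
        funext ω; rw [hTsucc]; rfl
      rw [h1]
      exact ih.sup ((hSmem (j + 1)).abs)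
  have hTsm : ∀ j, StronglyMeasurable[F j] (T j) := by
    intro j
    induction j with
    | zero =>
      have h0 : T 0 = fun _ => (0:ℝ) := funext hT0
      rw [h0]; exact stronglyMeasurable_const
    | succ j ih =>
      have h1 : T (j + 1) = fun ω => max (T j ω) |S (j + 1) ω| := funext (hTsucc j)
      rw [h1]
      exact sm_max (m := F (j + 1)) (ih.mono (hFmono (Nat.le_succ j)))
        (sm_abs (m := F (j + 1)) (hSsm (j + 1)))
  have hTmono' : ∀ ω, Monotone fun j => T j ω :=
    fun ω => monotone_nat_of_le_succ (fun j => hTmono j ω)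
  -- the key per-index estimate
  have key : ∀ j, 1 ≤ j → j ≤ n →
      ∫ ω, |S j ω| * (T j ω - T (j - 1) ω) ∂μ
        ≤ (∫ ω, (T j ω - T (j - 1) ω) * |S n ω| ∂μ)
          + ∫ ω, |X j ω * (μ[fun ω' => S n ω' - S j ω' | F j]) ω| ∂μ := by
    intro j hj1 hjn
    set Δ : Ω → ℝ := fun ω => T j ω - T (j - 1) ω with hΔdef
    set R : Ω → ℝ := μ[fun ω' => S n ω' - S j ω' | F j] with hRdef
    set D : Ω → ℝ := μ[S n | F j] with hDdef
    set E : Ω → ℝ := μ[fun ω' => |S n ω'| | F j] with hEdef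
    have hΔsm : StronglyMeasurable[F j] Δ :=
      (hTsm j).sub ((hTsm (j - 1)).mono (hFmono (Nat.sub_le j 1)))
    have hΔmem : MemLp Δ 2 μ := (hTmem j).sub (hTmem (j - 1))
    have hΔnonneg : ∀ ω, 0 ≤ Δ ω := fun ω => sub_nonneg.mpr (hTmono' ω (Nat.sub_le j 1))
    have hΔle : ∀ ω, Δ ω ≤ |X j ω| := by
      intro ω
      obtain ⟨m, rfl⟩ : ∃ m, j = m + 1 := ⟨j - 1, (Nat.succ_pred_eq_of_pos hj1).symm⟩
      simp only [hΔdef, Nat.add_sub_cancel]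
      exact hΔX m ω
    -- decomposition S j = D - R a.e.
    have hRD : R =ᵐ[μ] D - S j := by
      have h1 : μ[S n - S j | F j] =ᵐ[μ] μ[S n | F j] - μ[S j | F j] :=
        condExp_sub (hSint n) (hSint j) _
      have h2 : μ[S j | F j] = S j :=
        condExp_of_stronglyMeasurable (hFle j) (hSsm j) (hSint j)
      calc R = μ[S n - S j | F j] := by rw [hRdef]; rfl
        _ =ᵐ[μ] μ[S n | F j] - μ[S j | F j] := h1
        _ = D - S j := by rw [h2, hDdef]
    -- |D| ≤ E a.e.
    have habsD : ∀ᵐ ω ∂μ, |D ω| ≤ E ω := by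
      have h1 : μ[S n | F j] ≤ᵐ[μ] μ[fun ω' => |S n ω'| | F j] :=
        condExp_mono (hSint n) (hSint n).abs
          (Filter.Eventually.of_forall fun ω => le_abs_self _)
      have h2 : μ[-S n | F j] ≤ᵐ[μ] μ[fun ω' => |S n ω'| | F j] :=
        condExp_mono (hSint n).neg (hSint n).abs
          (Filter.Eventually.of_forall fun ω => neg_le_abs _)
      have h3 : μ[-S n | F j] =ᵐ[μ] -μ[S n | F j] := condExp_neg _ _
      filter_upwards [h1, h2, h3] with ω e1 e2 e3
      rw [abs_le]
      have e3' : (μ[-S n | F j]) ω = -D ω := by rw [e3]; rfl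
      rw [e3'] at e2
      exact ⟨by linarith, e1⟩
    -- integrability of the various products
    have hprodSn : Integrable (fun ω => Δ ω * |S n ω|) μ :=
      l2_mul_integrable hΔmem (hSmem n).abs
    have hpullE : μ[Δ * fun ω => |S n ω| | F j] =ᵐ[μ] Δ * E := by
      rw [hEdef]
      exact condExp_mul_of_stronglyMeasurable_left hΔsm hprodSn (hSint n).abs
    have hpullD : μ[Δ * S n | F j] =ᵐ[μ] Δ * D := by
      rw [hDdef]
      exact condExp_mul_of_stronglyMeasurable_left hΔsm (l2_mul_integrable hΔmem (hSmem n)) (hSint n)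
    have hΔDint : Integrable (fun ω => Δ ω * D ω) μ := integrable_condExp.congr hpullD
    have hΔEint : Integrable (fun ω => Δ ω * E ω) μ := integrable_condExp.congr hpullE
    have hpullR : μ[X j * (S n - S j) | F j] =ᵐ[μ] X j * R := by
      rw [hRdef]
      exact condExp_mul_of_stronglyMeasurable_left (hadapt j)
        (l2_mul_integrable (hX2 j) ((hSmem n).sub (hSmem j))) ((hSint n).sub (hSint j))
    have hXRint : Integrable (fun ω => X j ω * R ω) μ := integrable_condExp.congr hpullR
    -- step 1 : ∫ |S j| Δ ≤ ∫ |Δ D| + ∫ |X j R|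
    have hptw : ∀ᵐ ω ∂μ, |S j ω| * Δ ω ≤ |Δ ω * D ω| + |X j ω * R ω| := by
      filter_upwards [hRD] with ω hω
      have hω' : R ω = D ω - S j ω := hω
      have h1 : |S j ω| ≤ |D ω| + |R ω| := by
        have : S j ω = D ω - R ω := by linarith
        rw [this]
        exact abs_sub _ _
      have h2 : Δ ω * |R ω| ≤ |X j ω| * |R ω| :=
        mul_le_mul_of_nonneg_right (hΔle ω) (abs_nonneg _)
      have h3 : |X j ω * R ω| = |X j ω| * |R ω| := abs_mul _ _
      have h4 : |Δ ω * D ω| = Δ ω * |D ω| := by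
        rw [abs_mul, abs_of_nonneg (hΔnonneg ω)]
      nlinarith [hΔnonneg ω, abs_nonneg (R ω), abs_nonneg (D ω)]
    have hstep1 : ∫ ω, |S j ω| * Δ ω ∂μ
        ≤ (∫ ω, |Δ ω * D ω| ∂μ) + ∫ ω, |X j ω * R ω| ∂μ := by
      rw [← integral_add hΔDint.abs hXRint.abs]
      exact integral_mono_ae (l2_mul_integrable (hSmem j).abs hΔmem)
        (hΔDint.abs.add hXRint.abs) hptw
    -- step 2 : ∫ |Δ D| ≤ ∫ Δ E
    have hstep2 : ∫ ω, |Δ ω * D ω| ∂μ ≤ ∫ ω, Δ ω * E ω ∂μ := by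
      apply integral_mono_ae hΔDint.abs hΔEint
      filter_upwards [habsD] with ω hω
      calc |Δ ω * D ω| = Δ ω * |D ω| := by rw [abs_mul, abs_of_nonneg (hΔnonneg ω)]
        _ ≤ Δ ω * E ω := mul_le_mul_of_nonneg_left hω (hΔnonneg ω)
    -- step 3 : ∫ Δ E = ∫ Δ |S n|
    have hstep3 : ∫ ω, Δ ω * E ω ∂μ = ∫ ω, Δ ω * |S n ω| ∂μ := by
      have h2 : (fun ω => Δ ω * E ω) =ᵐ[μ] μ[Δ * fun ω' => |S n ω'| | F j] := by
        filter_upwards [hpullE] with ω hω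
        exact hω.symm
      rw [integral_congr_ae h2, integral_condExp (hFle j)]
      rfl
    calc ∫ ω, |S j ω| * Δ ω ∂μ
        ≤ (∫ ω, |Δ ω * D ω| ∂μ) + ∫ ω, |X j ω * R ω| ∂μ := hstep1
      _ ≤ (∫ ω, Δ ω * E ω ∂μ) + ∫ ω, |X j ω * R ω| ∂μ := by linarith
      _ = (∫ ω, Δ ω * |S n ω| ∂μ) + ∫ ω, |X j ω * R ω| ∂μ := by rw [hstep3]
  -- global integrabilities
  have hfj_int : ∀ j ∈ Finset.Icc 1 n,
      Integrable (fun ω => |S j ω| * (T j ω - T (j - 1) ω)) μ :=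
    fun j _ => l2_mul_integrable (hSmem j).abs ((hTmem j).sub (hTmem (j - 1)))
  have hgj_int : ∀ j ∈ Finset.Icc 1 n,
      Integrable (fun ω => (T j ω - T (j - 1) ω) * |S n ω|) μ :=
    fun j _ => l2_mul_integrable ((hTmem j).sub (hTmem (j - 1))) (hSmem n).abs
  have hTn2int : Integrable (fun ω => T n ω ^ 2) μ := by
    have h := l2_mul_integrable (hTmem n) (hTmem n)
    simp only [pow_two]; exact h
  have hSn2int : Integrable (fun ω => S n ω ^ 2) μ := by
    have h := l2_mul_integrable (hSmem n) (hSmem n)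
    simp only [pow_two]; exact h
  have hTSint : Integrable (fun ω => T n ω * |S n ω|) μ :=
    l2_mul_integrable (hTmem n) (hSmem n).abs
  -- step 1 of assembly
  have step1 : ∫ ω, T n ω ^ 2 ∂μ
      ≤ 2 * ∑ j ∈ Finset.Icc 1 n, ∫ ω, |S j ω| * (T j ω - T (j - 1) ω) ∂μ := by
    have hint : Integrable (fun ω => ∑ j ∈ Finset.Icc 1 n, |S j ω| * (T j ω - T (j - 1) ω)) μ :=
      integrable_finset_sum _ hfj_int
    calc ∫ ω, T n ω ^ 2 ∂μ
        ≤ ∫ ω, 2 * ∑ j ∈ Finset.Icc 1 n, |S j ω| * (T j ω - T (j - 1) ω) ∂μ :=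
          integral_mono hTn2int (hint.const_mul 2) hcore
      _ = 2 * ∑ j ∈ Finset.Icc 1 n, ∫ ω, |S j ω| * (T j ω - T (j - 1) ω) ∂μ := by
          rw [integral_const_mul, integral_finset_sum _ hfj_int]
  -- step 2 of assembly
  have step2 : ∑ j ∈ Finset.Icc 1 n, ∫ ω, |S j ω| * (T j ω - T (j - 1) ω) ∂μ
      ≤ (∑ j ∈ Finset.Icc 1 n, ∫ ω, (T j ω - T (j - 1) ω) * |S n ω| ∂μ)
        + ∑ j ∈ Finset.Icc 1 n, ∫ ω, |X j ω * (μ[fun ω' => S n ω' - S j ω' | F j]) ω| ∂μ := by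
    rw [← Finset.sum_add_distrib]
    apply Finset.sum_le_sum
    intro j hj
    obtain ⟨h1, h2⟩ := Finset.mem_Icc.mp hj
    exact key j h1 h2
  -- step 3 of assembly
  have step3 : ∑ j ∈ Finset.Icc 1 n, ∫ ω, (T j ω - T (j - 1) ω) * |S n ω| ∂μ
      = ∫ ω, T n ω * |S n ω| ∂μ := by
    rw [← integral_finset_sum _ hgj_int]
    have hptw : (fun ω => ∑ j ∈ Finset.Icc 1 n, (T j ω - T (j - 1) ω) * |S n ω|)
        =ᵐ[μ] fun ω => T n ω * |S n ω| :=
      Filter.Eventually.of_forall (fun ω => by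
        show ∑ j ∈ Finset.Icc 1 n, (T j ω - T (j - 1) ω) * |S n ω| = T n ω * |S n ω|
        rw [← Finset.sum_mul, hΔsum ω])
    exact integral_congr_ae hptw
  -- step 4 of assembly
  have step4 : ∫ ω, T n ω * |S n ω| ∂μ
      ≤ (∫ ω, T n ω ^ 2 ∂μ) / 4 + ∫ ω, S n ω ^ 2 ∂μ := by
    have hptw : ∀ ω, T n ω * |S n ω| ≤ T n ω ^ 2 / 4 + S n ω ^ 2 := by
      intro ω
      have h1 : S n ω ^ 2 = |S n ω| ^ 2 := (sq_abs _).symm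
      nlinarith [sq_nonneg (T n ω / 2 - |S n ω|)]
    calc ∫ ω, T n ω * |S n ω| ∂μ
        ≤ ∫ ω, (T n ω ^ 2 / 4 + S n ω ^ 2) ∂μ :=
          integral_mono hTSint ((hTn2int.div_const 4).add hSn2int) hptw
      _ = (∫ ω, T n ω ^ 2 ∂μ) / 4 + ∫ ω, S n ω ^ 2 ∂μ := by
          rw [integral_add (hTn2int.div_const 4) hSn2int, integral_div]
  -- the last term of the correction sum vanishes
  have hzero : ∫ ω, |X n ω * (μ[fun ω' => S n ω' - S n ω' | F n]) ω| ∂μ = 0 := by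
    have h0 : (fun ω' => S n ω' - S n ω') = (0 : Ω → ℝ) := funext fun ω' => sub_self _
    rw [h0, condExp_zero]
    simp
  have hsplit : ∀ c : ℕ → ℝ, ∑ j ∈ Finset.Icc 1 n, c j = (∑ j ∈ Finset.Icc 1 (n - 1), c j) + c n := by
    intro c
    have h : n - 1 + 1 = n := Nat.succ_pred_eq_of_pos hn
    calc ∑ j ∈ Finset.Icc 1 n, c j = ∑ j ∈ Finset.Icc 1 (n - 1 + 1), c j := by rw [h]
      _ = (∑ j ∈ Finset.Icc 1 (n - 1), c j) + c (n - 1 + 1) :=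
          Finset.sum_Icc_succ_top (Nat.succ_le_succ (Nat.zero_le _)) _
      _ = (∑ j ∈ Finset.Icc 1 (n - 1), c j) + c n := by rw [h]
  have hCsplit : ∑ j ∈ Finset.Icc 1 n, ∫ ω, |X j ω * (μ[fun ω' => S n ω' - S j ω' | F j]) ω| ∂μ
      = ∑ k ∈ Finset.Icc 1 (n - 1), ∫ ω, |X k ω * (μ[fun ω' => S n ω' - S k ω' | F k]) ω| ∂μ := by
    have h := hsplit (fun j => ∫ ω, |X j ω * (μ[fun ω' => S n ω' - S j ω' | F j]) ω| ∂μ)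
    have h' : (∑ j ∈ Finset.Icc 1 n, ∫ ω, |X j ω * (μ[fun ω' => S n ω' - S j ω' | F j]) ω| ∂μ)
        = (∑ j ∈ Finset.Icc 1 (n - 1), ∫ ω, |X j ω * (μ[fun ω' => S n ω' - S j ω' | F j]) ω| ∂μ)
          + ∫ ω, |X n ω * (μ[fun ω' => S n ω' - S n ω' | F n]) ω| ∂μ := h
    rw [h', hzero, add_zero]
  -- conclude
  have hMgoal : ∫ ω, (M ω) ^ 2 ∂μ = ∫ ω, T n ω ^ 2 ∂μ := by
    apply integral_congr_ae
    apply Filter.Eventually.of_forall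
    intro ω
    show M ω ^ 2 = T n ω ^ 2
    rw [hMT ω]
  rw [hMgoal]
  linarith [step1, step2, step3, step4, hCsplit]
end

section
/- Let (L_n)_{n≥1} be positive reals. If ∑_{n≥1} 1/(n L_n) < ∞, then ∑_{n≥1} (L_1 + ... + L_n)^{-1} < ∞. In fact there is an absolute constant C such that ∑_{n≥1} (L_1 + ... + L_n)^{-1} ≤ C ∑_{n≥1} 1/(n L_n). -/
/-!
By the Cauchy–Schwarz (HM–AM) inequality, `(L₁ + ⋯ + Lₘ)⁻¹ ≤ m⁻² ∑_{i ≤ m} Lᵢ⁻¹`.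
Summing over `m` and swapping the order of summation, each `Lᵢ⁻¹` is weighted by
`∑_{m ≥ i} m⁻² ≤ 2 / i`, so the constant `C = 2` works.
-/

open Finset

theorem sum_Icc_one_eq_sum_range {M : Type*} [AddCommMonoid M] (f : ℕ → M) (N : ℕ) :
    ∑ m ∈ Icc 1 N, f m = ∑ n ∈ range N, f (n + 1) := by
  rw [range_eq_Ico, sum_Ico_add' f, zero_add, Ico_add_one_right_eq_Icc]

section LinearOrderedField

variable {R : Type*} [Field R] [LinearOrder R] [IsStrictOrderedRing R]

theorem inv_sum_le_sum_inv_div_card_sq {ι : Type*} {s : Finset ι} (hs : s.Nonempty)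
    {a : ι → R} (ha : ∀ i ∈ s, 0 < a i) :
    (∑ i ∈ s, a i)⁻¹ ≤ (∑ i ∈ s, (a i)⁻¹) / (#s : R) ^ 2 := by
  have hcard : (0 : R) < #s := by exact_mod_cast hs.card_pos
  have titu := sq_sum_div_le_sum_sq_div s (fun _ => (1 : R)) ha
  simp only [sum_const, nsmul_eq_mul, mul_one, one_pow, one_div] at titu
  rwa [le_div_iff₀ (by positivity), inv_mul_eq_div]

theorem sum_Icc_inv_sq_le {i : ℕ} (hi : 1 ≤ i) (N : ℕ) :
    ∑ m ∈ Icc i N, ((m : R) ^ 2)⁻¹ ≤ 2 / i := by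
  obtain ⟨j, rfl⟩ : ∃ j, i = j + 1 := ⟨i - 1, by omega⟩
  have hIcc : Icc (j + 1) N = Ioo j (N + 1) := by ext; simp only [mem_Icc, mem_Ioo]; omega
  rw [hIcc]
  exact_mod_cast sum_Ioo_inv_sq_le j (N + 1)

theorem sum_Icc_inv_sum_Icc_le (L : ℕ → R) (N : ℕ) (hL : ∀ i ∈ Icc 1 N, 0 < L i) :
    ∑ m ∈ Icc 1 N, (∑ i ∈ Icc 1 m, L i)⁻¹ ≤ 2 * ∑ i ∈ Icc 1 N, ((i : R) * L i)⁻¹ := by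
  calc ∑ m ∈ Icc 1 N, (∑ i ∈ Icc 1 m, L i)⁻¹
      ≤ ∑ m ∈ Icc 1 N, ∑ i ∈ Icc 1 m, ((m : R) ^ 2)⁻¹ * (L i)⁻¹ := by
        refine sum_le_sum fun m hm => ?_
        have hm := mem_Icc.1 hm
        rw [← mul_sum, mul_comm, ← div_eq_mul_inv]
        simpa using inv_sum_le_sum_inv_div_card_sq (s := Icc 1 m) ⟨1, by simpa using hm.1⟩
          fun i hi => hL i (by simp only [mem_Icc] at hi ⊢; omega)
    _ = ∑ i ∈ Icc 1 N, (∑ m ∈ Icc i N, ((m : R) ^ 2)⁻¹) * (L i)⁻¹ := by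
        simp_rw [sum_mul]
        exact sum_comm' fun m i => by simp only [mem_Icc]; omega
    _ ≤ ∑ i ∈ Icc 1 N, 2 / i * (L i)⁻¹ := by
        refine sum_le_sum fun i hi => ?_
        have hLi := hL i hi
        gcongr
        exact sum_Icc_inv_sq_le (mem_Icc.1 hi).1 N
    _ = 2 * ∑ i ∈ Icc 1 N, ((i : R) * L i)⁻¹ := by
        rw [mul_sum]
        exact sum_congr rfl fun i _ => by rw [mul_inv, div_eq_mul_inv, mul_assoc]

end LinearOrderedField

/-- If `∑ 1/(n L_n) < ∞` then `∑ (L_1 + ... + L_n)⁻¹ < ∞`, with an absolute constant `C`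
such that `∑ (L_1+...+L_n)⁻¹ ≤ C ∑ 1/(n L_n)`. -/
theorem stmt6 :
    ∃ C : ℝ, 0 < C ∧
      ∀ L : ℕ → ℝ, (∀ i, 1 ≤ i → 0 < L i) →
        Summable (fun n : ℕ => (((n : ℝ) + 1) * L (n + 1))⁻¹) →
          Summable (fun n : ℕ => (∑ i ∈ Finset.Icc 1 (n + 1), L i)⁻¹) ∧
          ∑' n : ℕ, (∑ i ∈ Finset.Icc 1 (n + 1), L i)⁻¹ ≤
            C * ∑' n : ℕ, (((n : ℝ) + 1) * L (n + 1))⁻¹ := by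
  refine ⟨2, two_pos, fun L hL hsum => ?_⟩
  have hpartial : ∀ N, ∑ n ∈ range N, (∑ i ∈ Icc 1 (n + 1), L i)⁻¹ ≤
      2 * ∑' n : ℕ, (((n : ℝ) + 1) * L (n + 1))⁻¹ := fun N =>
    calc ∑ n ∈ range N, (∑ i ∈ Icc 1 (n + 1), L i)⁻¹
        = ∑ m ∈ Icc 1 N, (∑ i ∈ Icc 1 m, L i)⁻¹ := (sum_Icc_one_eq_sum_range (fun m => (∑ i ∈ Icc 1 m, L i)⁻¹) N).symm
      _ ≤ 2 * ∑ i ∈ Icc 1 N, ((i : ℝ) * L i)⁻¹ :=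
        sum_Icc_inv_sum_Icc_le L N fun i hi => hL i (mem_Icc.1 hi).1
      _ = 2 * ∑ n ∈ range N, (((n : ℝ) + 1) * L (n + 1))⁻¹ := by
        rw [sum_Icc_one_eq_sum_range]
        push_cast
        rfl
      _ ≤ 2 * ∑' n : ℕ, (((n : ℝ) + 1) * L (n + 1))⁻¹ := by
        gcongr
        refine hsum.sum_le_tsum _ fun n _ => ?_
        have := hL (n + 1) n.succ_pos
        positivity
  have hnonneg : ∀ n, 0 ≤ (∑ i ∈ Icc 1 (n + 1), L i)⁻¹ := fun n =>
    inv_nonneg.2 (sum_nonneg fun i hi => (hL i (mem_Icc.1 hi).1).le)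
  have hsummable := summable_of_sum_range_le hnonneg hpartial
  exact ⟨hsummable, hsummable.tsum_le_of_sum_range_le hpartial⟩
end

section
/- Let (a_n)_{n≥1} be a sequence of nonnegative reals. If ∑_{n≥1} a_n/√n < ∞, then there exists a sequence (L_n)_{n≥1} of positive reals with ∑_{n≥1} 1/(n L_n) < ∞ and ∑_{n≥1} L_n a_n^2 < ∞. Conversely, if such a sequence (L_n) exists, then ∑_{n≥1} a_n/√n < ∞. -/
set_option maxHeartbeats 1000000

/-- Equivalence of conditions (22) and (23): for nonnegative reals `a_n`,
`∑ a_n/√n < ∞` iff there are positive `L_n` with `∑ 1/(n L_n) < ∞` and `∑ L_n a_n² < ∞`. -/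
theorem stmt7 (a : ℕ → ℝ) (ha : ∀ n, 0 ≤ a n) :
    Summable (fun n : ℕ => a (n + 1) / Real.sqrt (n + 1)) ↔
      ∃ L : ℕ → ℝ, (∀ n, 1 ≤ n → 0 < L n) ∧
        Summable (fun n : ℕ => (((n : ℝ) + 1) * L (n + 1))⁻¹) ∧
        Summable (fun n : ℕ => L (n + 1) * (a (n + 1)) ^ 2) := by
  have hsq : ∀ n : ℕ, (0:ℝ) < Real.sqrt (n + 1) := by
    intro n
    apply Real.sqrt_pos.mpr
    positivity
  have hinvsq : Summable (fun n : ℕ => (((n:ℝ) + 1) * ((n:ℝ) + 1))⁻¹) := by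
    have h2 : Summable (fun n : ℕ => 1 / ((n:ℝ)) ^ 2) :=
      Real.summable_one_div_nat_pow.mpr (by norm_num)
    have h3 : Summable (fun n : ℕ => 1 / (((n + 1 : ℕ)):ℝ) ^ 2) :=
      (summable_nat_add_iff 1).mpr h2
    apply h3.congr
    intro n
    push_cast
    rw [one_div, sq]
  constructor
  · intro h
    refine ⟨fun m => if a m = 0 then m else (Real.sqrt m * a m)⁻¹, ?_, ?_, ?_⟩
    · intro n hn
      by_cases h0 : a n = 0
      · simp [h0]; exact_mod_cast hn
      · simp only [h0, if_false]
        have hap := (ha n).lt_of_ne (Ne.symm h0)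
        have hs : (0:ℝ) < Real.sqrt n := Real.sqrt_pos.mpr (by exact_mod_cast hn)
        positivity
    · refine Summable.of_nonneg_of_le ?_ ?_ (h.add hinvsq)
      · intro n
        by_cases h0 : a (n + 1) = 0
        · simp only [if_pos h0]
          positivity
        · have hap := (ha (n + 1)).lt_of_ne (Ne.symm h0)
          simp only [if_neg h0]
          have hs := hsq n
          push_cast
          positivity
      · intro n
        by_cases h0 : a (n + 1) = 0
        · have hcast : ((n + 1 : ℕ) : ℝ) = (n:ℝ) + 1 := by push_cast; ring
          simp [h0, hcast]
        · have hap : 0 < a (n + 1) := (ha _).lt_of_ne (Ne.symm h0)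
          have hcast : ((n + 1 : ℕ) : ℝ) = (n:ℝ) + 1 := by push_cast; ring
          simp only [if_neg h0, hcast]
          have hs := hsq n
          have hnn : ((n:ℝ) + 1) = Real.sqrt ((n:ℝ)+1) * Real.sqrt ((n:ℝ)+1) :=
            (Real.mul_self_sqrt (by positivity)).symm
          have hkey : (((n:ℝ) + 1) * (Real.sqrt ((n:ℝ) + 1) * a (n + 1))⁻¹)⁻¹
              = a (n + 1) / Real.sqrt ((n:ℝ) + 1) := by
            calc (((n:ℝ) + 1) * (Real.sqrt ((n:ℝ) + 1) * a (n + 1))⁻¹)⁻¹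
                = (Real.sqrt ((n:ℝ) + 1) * a (n + 1)) / ((n:ℝ) + 1) := by
                  rw [mul_inv, inv_inv]; ring
              _ = (Real.sqrt ((n:ℝ) + 1) * a (n + 1)) /
                    (Real.sqrt ((n:ℝ)+1) * Real.sqrt ((n:ℝ)+1)) := by rw [← hnn]
              _ = a (n + 1) / Real.sqrt ((n:ℝ) + 1) :=
                  mul_div_mul_left _ _ hs.ne'
          rw [hkey]
          have h2 : (0:ℝ) ≤ (((n:ℝ) + 1) * ((n:ℝ) + 1))⁻¹ := by positivity
          linarith
    · refine Summable.of_nonneg_of_le ?_ ?_ h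
      · intro n
        by_cases h0 : a (n + 1) = 0
        · simp [h0]
        · have hap : 0 < a (n + 1) := (ha _).lt_of_ne (Ne.symm h0)
          simp only [if_neg h0]
          have hs := hsq n
          push_cast
          positivity
      · intro n
        by_cases h0 : a (n + 1) = 0
        · simp [h0]
        · have hap : 0 < a (n + 1) := (ha _).lt_of_ne (Ne.symm h0)
          have hcast : ((n + 1 : ℕ) : ℝ) = (n:ℝ) + 1 := by push_cast; ring
          simp only [if_neg h0, hcast]
          have hs := hsq n
          have : (Real.sqrt ((n:ℝ) + 1) * a (n + 1))⁻¹ * a (n + 1) ^ 2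
              = a (n + 1) / Real.sqrt ((n:ℝ) + 1) := by
            field_simp
          rw [this]
  · rintro ⟨L, hL, h1, h2⟩
    have hLpos : ∀ n : ℕ, 0 < L (n + 1) := fun n => hL (n + 1) (Nat.le_add_left 1 n)
    refine Summable.of_nonneg_of_le ?_ ?_ ((h1.add h2).mul_left (1/2))
    · intro n
      have hs := hsq n
      have := ha (n + 1)
      positivity
    · intro n
      set x := (((n:ℝ) + 1) * L (n + 1))⁻¹ with hx
      set y := L (n + 1) * (a (n + 1)) ^ 2 with hy
      have hxpos : 0 < x := by have := hLpos n; positivity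
      have hynn : 0 ≤ y := by have h := (hLpos n).le; have := ha (n + 1); positivity
      have hxy : x * y = (a (n + 1))^2 / ((n:ℝ) + 1) := by
        have := (hLpos n).ne'
        rw [hx, hy, mul_inv, div_eq_mul_inv, mul_assoc, ← mul_assoc (L (n + 1))⁻¹,
          inv_mul_cancel₀ this, one_mul, mul_comm]
      have hsxy : Real.sqrt x * Real.sqrt y = a (n + 1) / Real.sqrt ((n:ℝ) + 1) := by
        rw [← Real.sqrt_mul hxpos.le, hxy, Real.sqrt_div (sq_nonneg _),
          Real.sqrt_sq (ha _)]
      have h1' := sq_nonneg (Real.sqrt x - Real.sqrt y)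
      have hx2 : Real.sqrt x ^ 2 = x := Real.sq_sqrt hxpos.le
      have hy2 : Real.sqrt y ^ 2 = y := Real.sq_sqrt hynn
      have hle : a (n + 1) / Real.sqrt ((n:ℝ)+1) ≤ (1/2) * (x + y) := by
        rw [← hsxy]; nlinarith
      exact hle
end

section
/- Let (X_i)_{i∈Z} be a stationary sequence with stationary filtration (F_i), E(X_0) = 0, E(X_0^2) < ∞, S_n = ∑_{k=1}^n X_k. Then the dyadic sum ∑_{j=0}^∞ 2^{-j/2} ‖E(S_{2^j}|F_0)‖_2 is finite if and only if ∑_{n=1}^∞ n^{-3/2} ‖E(S_n|F_0)‖_2 is finite. More precisely, there exist positive constants C_1, C_2 such that for all r ≥ 1 and all n with 2^{r-1} < n ≤ 2^r: C_1 ∑_{j=1}^n j^{-3/2} ‖E(S_j|F_0)‖_2 ≤ ∑_{j=0}^{r-1} 2^{-j/2} ‖E(S_{2^j}|F_0)‖_2 ≤ C_2 ∑_{j=1}^n j^{-3/2} ‖E(S_j|F_0)‖_2. -/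
set_option maxHeartbeats 1000000

open Finset

private lemma myGeomLe (q : ℝ) (hq0 : 0 ≤ q) (hq1 : q < 1) (N : ℕ) :
    ∑ m ∈ range N, q ^ m ≤ (1 - q)⁻¹ := by
  induction N with
  | zero =>
    simp only [range_zero, sum_empty]
    rw [inv_nonneg]; linarith
  | succ n ih =>
    rw [geom_sum_succ]
    have h := mul_le_mul_of_nonneg_left ih hq0
    have h1q : (0:ℝ) < 1 - q := by linarith
    have he : q * (1 - q)⁻¹ + 1 = (1 - q)⁻¹ := by field_simp; ring
    linarith

private lemma swap_le (g : ℕ → ℝ) (hg : ∀ i, 0 ≤ g i) (q : ℝ) (hq0 : 0 ≤ q) (hq1 : q < 1)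
    (M : ℕ) :
    ∑ m ∈ range M, q ^ m * (∑ i ∈ range m, g i)
      ≤ q * (1 - q)⁻¹ * ∑ i ∈ range M, q ^ i * g i := by
  have step1 : ∀ m ∈ range M, q ^ m * (∑ i ∈ range m, g i)
      = ∑ i ∈ range M, if i < m then q ^ m * g i else 0 := by
    intro m hm
    rw [mem_range] at hm
    rw [← Finset.sum_filter]
    have hf : (range M).filter (fun i => i < m) = range m := by
      ext i; simp only [mem_filter, mem_range]; omega
    rw [hf, Finset.mul_sum]
  rw [Finset.sum_congr rfl step1, Finset.sum_comm]
  have step2 : ∀ i ∈ range M, (∑ m ∈ range M, if i < m then q ^ m * g i else 0)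
      ≤ (q * (1 - q)⁻¹ * q ^ i) * g i := by
    intro i _
    have h1 : (∑ m ∈ range M, if i < m then q ^ m * g i else 0)
        = (∑ m ∈ Ico (i+1) M, q ^ m) * g i := by
      rw [Finset.sum_mul, ← Finset.sum_filter]
      congr 1
      ext m; simp only [mem_filter, mem_range, mem_Ico]; omega
    rw [h1]
    have hsum : (∑ m ∈ Ico (i+1) M, q ^ m) ≤ q ^ (i+1) * (1 - q)⁻¹ := by
      rw [Finset.sum_Ico_eq_sum_range]
      have hc : ∀ u ∈ range (M - (i+1)), q ^ (i + 1 + u) = q ^ (i+1) * q ^ u :=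
        fun u _ => pow_add q _ _
      rw [Finset.sum_congr rfl hc, ← Finset.mul_sum]
      exact mul_le_mul_of_nonneg_left (myGeomLe q hq0 hq1 _) (pow_nonneg hq0 _)
    calc (∑ m ∈ Ico (i+1) M, q ^ m) * g i
        ≤ q ^ (i+1) * (1 - q)⁻¹ * g i := mul_le_mul_of_nonneg_right hsum (hg i)
      _ = (q * (1 - q)⁻¹ * q ^ i) * g i := by ring
  calc ∑ i ∈ range M, (∑ m ∈ range M, if i < m then q ^ m * g i else 0)
      ≤ ∑ i ∈ range M, (q * (1 - q)⁻¹ * q ^ i) * g i := Finset.sum_le_sum step2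
    _ = q * (1 - q)⁻¹ * ∑ i ∈ range M, q ^ i * g i := by
        rw [Finset.mul_sum]; exact Finset.sum_congr rfl fun i _ => by ring

private lemma swap_le' (g : ℕ → ℝ) (hg : ∀ i, 0 ≤ g i) (q : ℝ) (hq0 : 0 ≤ q) (hq1 : q < 1)
    (M : ℕ) :
    ∑ l ∈ range M, q ^ l * (∑ i ∈ range (l + 1), g i)
      ≤ (1 - q)⁻¹ * ∑ i ∈ range M, q ^ i * g i := by
  have h1q : (0:ℝ) < 1 - q := by linarith
  have hsp : ∀ l ∈ range M, q ^ l * (∑ i ∈ range (l+1), g i)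
      = q ^ l * (∑ i ∈ range l, g i) + q ^ l * g l := by
    intro l _; rw [Finset.sum_range_succ]; ring
  rw [Finset.sum_congr rfl hsp, Finset.sum_add_distrib]
  have h1 := swap_le g hg q hq0 hq1 M
  have h3 : q * (1-q)⁻¹ + 1 = (1-q)⁻¹ := by field_simp; ring
  have h4 : q * (1-q)⁻¹ * (∑ i ∈ range M, q ^ i * g i) + (∑ i ∈ range M, q ^ i * g i)
      = (1-q)⁻¹ * (∑ i ∈ range M, q ^ i * g i) := by
    have hne : 1 - q ≠ 0 := ne_of_gt h1q
    field_simp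
    ring
  linarith
private lemma combMain (a : ℕ → ℝ) (ha0 : a 0 = 0) (hnn : ∀ n, 0 ≤ a n)
    (hsub : ∀ m n, a (m + n) ≤ a m + a n) (r n : ℕ) (hr : 1 ≤ r)
    (hn1 : 2 ^ (r - 1) < n) (hn2 : n ≤ 2 ^ r) :
    (1/8 : ℝ) * (∑ j ∈ Icc 1 n, a j / (j : ℝ) ^ ((3:ℝ)/2))
        ≤ ∑ j ∈ range r, a (2 ^ j) / (2:ℝ) ^ ((j:ℝ)/2) ∧
    ∑ j ∈ range r, a (2 ^ j) / (2:ℝ) ^ ((j:ℝ)/2)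
        ≤ 300 * ∑ j ∈ Icc 1 n, a j / (j : ℝ) ^ ((3:ℝ)/2) := by
  have hs0 : (0:ℝ) < Real.sqrt 2 := Real.sqrt_pos.mpr (by norm_num)
  set s : ℝ := Real.sqrt 2 with hs_def
  have hs2 : s ^ 2 = 2 := Real.sq_sqrt (by norm_num)
  have hs1 : 1 < s := by nlinarith
  set q : ℝ := s⁻¹ with hq_def
  have hq0 : 0 < q := inv_pos.mpr hs0
  have hqs : q * s = 1 := inv_mul_cancel₀ (ne_of_gt hs0)
  have hq1 : q < 1 := by nlinarith
  -- bridges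
  have hb2 : ∀ j : ℕ, (2:ℝ) ^ ((j:ℝ)/2) = s ^ j := by
    intro j
    rw [hs_def, Real.sqrt_eq_rpow, ← Real.rpow_natCast ((2:ℝ) ^ ((1:ℝ)/2)) j,
      ← Real.rpow_mul (by norm_num : (0:ℝ) ≤ 2)]
    congr 1; ring
  have hconv : ∀ j : ℕ, a (2 ^ j) / (2:ℝ) ^ ((j:ℝ)/2) = q ^ j * a (2 ^ j) := by
    intro j; rw [hb2 j, div_eq_mul_inv, hq_def, inv_pow]; ring
  have hb3 : ∀ l : ℕ, ((2 ^ l : ℕ) : ℝ) ^ ((3:ℝ)/2) = s ^ (3 * l) := by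
    intro l
    have h2l : ((2 ^ l : ℕ) : ℝ) = s ^ (2 * l) := by push_cast; rw [pow_mul, hs2]
    rw [h2l, ← Real.rpow_natCast s (2 * l), ← Real.rpow_mul (le_of_lt hs0),
      ← Real.rpow_natCast s (3 * l)]
    congr 1; push_cast; ring
  have hgoalD : ∑ j ∈ range r, a (2^j) / (2:ℝ)^((j:ℝ)/2) = ∑ j ∈ range r, q ^ j * a (2 ^ j) :=
    Finset.sum_congr rfl fun j _ => hconv j
  rw [hgoalD]
  set A : ℝ := ∑ j ∈ Icc 1 n, a j / (j:ℝ) ^ ((3:ℝ)/2) with hA_def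
  set D : ℝ := ∑ j ∈ range r, q ^ j * a (2 ^ j) with hD_def
  have htnn : ∀ j : ℕ, 0 ≤ a j / (j:ℝ) ^ ((3:ℝ)/2) :=
    fun j => div_nonneg (hnn j) (Real.rpow_nonneg (Nat.cast_nonneg j) _)
  have hAnn : 0 ≤ A := Finset.sum_nonneg fun j _ => htnn j
  have hDnn : 0 ≤ D := Finset.sum_nonneg fun j _ => mul_nonneg (pow_nonneg hq0.le j) (hnn _)
  have hpow_pos : ∀ j : ℕ, 1 ≤ j → (0:ℝ) < (j:ℝ) ^ ((3:ℝ)/2) := by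
    intro j hj
    exact Real.rpow_pos_of_pos (by exact_mod_cast hj) _
  have hterm : ∀ j : ℕ, 1 ≤ j → j ≤ n → a j / (j:ℝ) ^ ((3:ℝ)/2) ≤ A := fun j h1 h2 =>
    Finset.single_le_sum (fun i _ => htnn i) (Finset.mem_Icc.mpr ⟨h1, h2⟩)
  have ha2l : ∀ l : ℕ, 2 ^ l ≤ n → a (2 ^ l) ≤ s ^ (3 * l) * A := by
    intro l hl
    have h1 : (1:ℕ) ≤ 2 ^ l := Nat.one_le_two_pow
    have h2 := hterm (2 ^ l) h1 hl
    rw [div_le_iff₀ (hpow_pos _ h1)] at h2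
    rw [hb3 l] at h2
    nlinarith
  -- binary expansion bound
  have L1 : ∀ m : ℕ, ∀ v, v < 2 ^ m → a v ≤ ∑ i ∈ range m, a (2 ^ i) := by
    intro m
    induction m with
    | zero =>
      intro v hv
      interval_cases v
      simp [ha0]
    | succ m ih =>
      intro v hv
      have hp : 2 ^ (m+1) = 2 ^ m + 2 ^ m := by rw [pow_succ]; ring
      rcases lt_or_ge v (2 ^ m) with h | h
      · refine le_trans (ih v h) ?_
        rw [Finset.sum_range_succ]
        linarith [hnn (2 ^ m)]
      · have hv2 : v - 2 ^ m < 2 ^ m := by omega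
        have hsplit : v = 2 ^ m + (v - 2 ^ m) := by omega
        calc a v = a (2 ^ m + (v - 2 ^ m)) := by rw [← hsplit]
          _ ≤ a (2 ^ m) + a (v - 2 ^ m) := hsub _ _
          _ ≤ a (2 ^ m) + ∑ i ∈ range m, a (2 ^ i) := by linarith [ih _ hv2]
          _ = ∑ i ∈ range (m+1), a (2 ^ i) := by rw [Finset.sum_range_succ]; ring
  have hIccIoc : ∀ m : ℕ, Icc 1 m = Ioc 0 m := by
    intro m; ext x; simp only [Finset.mem_Icc, Finset.mem_Ioc]; omega
  have hKval : (1 - q)⁻¹ = 2 + s := by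
    refine inv_eq_of_mul_eq_one_right ?_
    have hsne : s ≠ 0 := ne_of_gt hs0
    rw [hq_def]
    field_simp
    nlinarith
  have hsle : s ≤ 3/2 := by nlinarith
  have ha1D : a 1 ≤ D := by
    have h1 : q ^ 0 * a (2 ^ 0) ≤ D :=
      Finset.single_le_sum (fun j _ => mul_nonneg (pow_nonneg hq0.le j) (hnn _))
        (Finset.mem_range.mpr hr)
    simpa using h1
  constructor
  · -- LOWER BOUND
    have Lcl : ∀ ρ : ℕ, (∑ j ∈ Icc 1 (2 ^ ρ), a j / (j:ℝ) ^ ((3:ℝ)/2))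
        ≤ a 1 + ∑ l ∈ range ρ, 2 * q ^ l * (∑ i ∈ range (l+1), a (2 ^ i)) := by
      intro ρ
      induction ρ with
      | zero => simp [Real.one_rpow]
      | succ ρ ih =>
        have hle : (2:ℕ) ^ ρ ≤ 2 ^ (ρ+1) := Nat.pow_le_pow_right (by norm_num) (Nat.le_succ ρ)
        have hsplit : (∑ j ∈ Icc 1 (2 ^ (ρ+1)), a j / (j:ℝ) ^ ((3:ℝ)/2))
            = (∑ j ∈ Icc 1 (2^ρ), a j / (j:ℝ) ^ ((3:ℝ)/2))
              + ∑ j ∈ Ioc (2^ρ) (2^(ρ+1)), a j / (j:ℝ) ^ ((3:ℝ)/2) := by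
          rw [hIccIoc, hIccIoc, Finset.sum_Ioc_consecutive _ (Nat.zero_le _) hle]
        have hSgnn : 0 ≤ ∑ i ∈ range (ρ+1), a (2 ^ i) := Finset.sum_nonneg fun i _ => hnn _
        have htail : ∑ j ∈ Ioc (2^ρ) (2^(ρ+1)), a j / (j:ℝ)^((3:ℝ)/2)
            ≤ 2 * q ^ ρ * (∑ i ∈ range (ρ+1), a (2^i)) := by
          have hbound : ∀ j ∈ Ioc (2^ρ) (2^(ρ+1)), a j / (j:ℝ)^((3:ℝ)/2)
              ≤ (2 * ∑ i ∈ range (ρ+1), a (2 ^ i)) / s ^ (3 * ρ) := by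
            intro j hj
            rw [Finset.mem_Ioc] at hj
            have haj : a j ≤ 2 * ∑ i ∈ range (ρ+1), a (2 ^ i) := by
              rcases lt_or_eq_of_le hj.2 with h | h
              · linarith [L1 (ρ+1) j h]
              · have hp : 2 ^ (ρ+1) = 2 ^ ρ + 2 ^ ρ := by rw [pow_succ]; ring
                have h2 : a (2 ^ (ρ+1)) ≤ 2 * a (2 ^ ρ) := by
                  rw [hp]; linarith [hsub (2^ρ) (2^ρ)]
                have h3 : a (2 ^ ρ) ≤ ∑ i ∈ range (ρ+1), a (2 ^ i) :=
                  Finset.single_le_sum (fun i _ => hnn _) (Finset.mem_range.mpr (Nat.lt_succ_self ρ))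
                rw [h]; linarith
            refine div_le_div₀ (by linarith) haj (pow_pos hs0 _) ?_
            rw [← hb3 ρ]
            exact Real.rpow_le_rpow (Nat.cast_nonneg _) (by exact_mod_cast hj.1.le) (by norm_num)
          have hcard : (Ioc (2^ρ) (2^(ρ+1))).card = 2 ^ ρ := by
            rw [Nat.card_Ioc]
            have hp : 2 ^ (ρ+1) = 2 ^ ρ + 2 ^ ρ := by rw [pow_succ]; ring
            omega
          calc ∑ j ∈ Ioc (2^ρ) (2^(ρ+1)), a j / (j:ℝ)^((3:ℝ)/2)
              ≤ (Ioc (2^ρ) (2^(ρ+1))).card • ((2 * ∑ i ∈ range (ρ+1), a (2 ^ i)) / s ^ (3*ρ)) :=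
                Finset.sum_le_card_nsmul _ _ _ hbound
            _ = (2:ℝ)^ρ * ((2 * ∑ i ∈ range (ρ+1), a (2 ^ i)) / s ^ (3*ρ)) := by
                rw [hcard, nsmul_eq_mul]; push_cast; ring
            _ = 2 * q ^ ρ * (∑ i ∈ range (ρ+1), a (2 ^ i)) := by
                have hs3ρ : s ^ (3*ρ) = (2:ℝ)^ρ * s ^ ρ := by
                  rw [show 3*ρ = 2*ρ + ρ by ring, pow_add, pow_mul, hs2]
                have hsρ : (0:ℝ) < s ^ ρ := pow_pos hs0 _
                have h2ρ : (0:ℝ) < (2:ℝ) ^ ρ := by positivity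
                rw [hs3ρ, hq_def, inv_pow]
                field_simp
        rw [hsplit, Finset.sum_range_succ]
        linarith
    have hA2r : A ≤ ∑ j ∈ Icc 1 (2 ^ r), a j / (j:ℝ)^((3:ℝ)/2) :=
      Finset.sum_le_sum_of_subset_of_nonneg (Finset.Icc_subset_Icc_right hn2)
        fun j _ _ => htnn j
    have hE : ∑ l ∈ range r, q ^ l * (∑ i ∈ range (l+1), a (2 ^ i)) ≤ (1-q)⁻¹ * D := by
      simpa using swap_le' (fun i => a (2 ^ i)) (fun i => hnn _) q hq0.le hq1 r
    have h2E : ∑ l ∈ range r, 2 * q ^ l * (∑ i ∈ range (l+1), a (2 ^ i))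
        = 2 * ∑ l ∈ range r, q ^ l * (∑ i ∈ range (l+1), a (2 ^ i)) := by
      rw [Finset.mul_sum]; exact Finset.sum_congr rfl fun l _ => by ring
    have hAle : A ≤ a 1 + 2 * ((1-q)⁻¹ * D) := by
      have := Lcl r
      rw [h2E] at this
      linarith
    rw [hKval] at hAle
    nlinarith [mul_le_mul_of_nonneg_right hsle hDnn]
  · -- UPPER BOUND
    rcases le_or_gt r 4 with hr4 | hr5
    · have hje : ∀ j ∈ range r, q ^ j * a (2 ^ j) ≤ 23 * A := by
        intro j hj
        rw [Finset.mem_range] at hj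
        have h2jn : 2 ^ j ≤ n :=
          le_trans (Nat.pow_le_pow_right (by norm_num) (by omega : j ≤ r - 1)) (le_of_lt hn1)
        have h1 := ha2l j h2jn
        have hq_le1 : q ^ j ≤ 1 := pow_le_one₀ hq0.le (le_of_lt hq1)
        have hs3j : s ^ (3*j) ≤ 23 := by
          have h9 : s ^ 9 = 16 * s := by
            rw [show (9:ℕ) = 2*4+1 by norm_num, pow_succ, pow_mul, hs2]; norm_num
          have hmono : s ^ (3*j) ≤ s ^ 9 := pow_le_pow_right₀ hs1.le (by omega)
          nlinarith
        have hann : 0 ≤ a (2 ^ j) := hnn _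
        have h2 : q ^ j * a (2 ^ j) ≤ a (2 ^ j) := by nlinarith
        nlinarith
      calc D ≤ ∑ _j ∈ range r, 23 * A := Finset.sum_le_sum hje
        _ = (r:ℝ) * (23 * A) := by rw [Finset.sum_const, Finset.card_range, nsmul_eq_mul]
        _ ≤ 300 * A := by
            have hrle : (r:ℝ) ≤ 4 := by exact_mod_cast hr4
            have hrpos : (0:ℝ) ≤ (r:ℝ) := Nat.cast_nonneg r
            nlinarith
    · -- r ≥ 5
      have hsplitD : D = (∑ j ∈ range 4, q ^ j * a (2^j))
          + ∑ m ∈ range (r-4), q ^ (4+m) * a (2 ^ (4+m)) := by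
        have h1 : (∑ j ∈ Ico 0 4, q ^ j * a (2^j)) + ∑ j ∈ Ico 4 r, q ^ j * a (2^j)
            = ∑ j ∈ Ico 0 r, q ^ j * a (2^j) :=
          Finset.sum_Ico_consecutive _ (Nat.zero_le 4) (by omega : 4 ≤ r)
        have h2 : ∑ j ∈ Ico 4 r, q ^ j * a (2^j)
            = ∑ m ∈ range (r-4), q ^ (4+m) * a (2 ^ (4+m)) := Finset.sum_Ico_eq_sum_range _ _ _
        rw [hD_def, Finset.range_eq_Ico, ← h1, h2, ← Finset.range_eq_Ico]
      have hhead : ∑ j ∈ range 4, q ^ j * a (2 ^ j) ≤ 92 * A := by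
        have hje : ∀ j ∈ range 4, q ^ j * a (2 ^ j) ≤ 23 * A := by
          intro j hj
          rw [Finset.mem_range] at hj
          have h2jn : 2 ^ j ≤ n :=
            le_trans (Nat.pow_le_pow_right (by norm_num) (by omega : j ≤ r - 1)) (le_of_lt hn1)
          have h1 := ha2l j h2jn
          have hq_le1 : q ^ j ≤ 1 := pow_le_one₀ hq0.le (le_of_lt hq1)
          have hs3j : s ^ (3*j) ≤ 23 := by
            have h9 : s ^ 9 = 16 * s := by
              rw [show (9:ℕ) = 2*4+1 by norm_num, pow_succ, pow_mul, hs2]; norm_num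
            have hmono : s ^ (3*j) ≤ s ^ 9 := pow_le_pow_right₀ hs1.le (by omega)
            nlinarith
          have hann : 0 ≤ a (2 ^ j) := hnn _
          have h2 : q ^ j * a (2 ^ j) ≤ a (2 ^ j) := by nlinarith
          nlinarith
        calc ∑ j ∈ range 4, q ^ j * a (2 ^ j) ≤ ∑ _j ∈ range 4, 23 * A :=
              Finset.sum_le_sum hje
          _ = 92 * A := by rw [Finset.sum_const, Finset.card_range, nsmul_eq_mul]; ring
      have hblock : ∀ m : ℕ, q ^ (4+m) * a (2 ^ (4+m))
          ≤ 16 * (∑ k ∈ Ioc (15 * 2^m) (16 * 2^m), a k / (k:ℝ)^((3:ℝ)/2))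
            + q ^ 4 * (q ^ m * ∑ i ∈ range m, a (2 ^ i)) := by
        intro m
        have h16 : 16 * 2 ^ m = 2 ^ (4 + m) := by rw [pow_add]; norm_num
        have honepow : (1:ℕ) ≤ 2 ^ m := Nat.one_le_two_pow
        have hSgnn : 0 ≤ ∑ i ∈ range m, a (2 ^ i) := Finset.sum_nonneg fun _ _ => hnn _
        have hpt : ∀ k ∈ Ioc (15 * 2^m) (16 * 2^m),
            a (2 ^ (4+m)) ≤ a k + ∑ i ∈ range m, a (2 ^ i) := by
          intro k hk
          rw [Finset.mem_Ioc] at hk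
          have hk2 : 2 ^ (4+m) - k < 2 ^ m := by omega
          have hsplitk : 2 ^ (4+m) = k + (2 ^ (4+m) - k) := by omega
          calc a (2 ^ (4+m)) = a (k + (2^(4+m) - k)) := by rw [← hsplitk]
            _ ≤ a k + a (2^(4+m) - k) := hsub _ _
            _ ≤ a k + ∑ i ∈ range m, a (2 ^ i) := by linarith [L1 m _ hk2]
        have hcardB : (Ioc (15 * 2^m) (16 * 2^m)).card = 2 ^ m := by
          rw [Nat.card_Ioc]; omega
        have hsumB : (2:ℝ) ^ m * a (2 ^ (4+m))
            ≤ (∑ k ∈ Ioc (15 * 2^m) (16 * 2^m), a k) + (2:ℝ)^m * ∑ i ∈ range m, a (2 ^ i) := by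
          have h1 : ∑ _k ∈ Ioc (15 * 2^m) (16 * 2^m), a (2 ^ (4+m))
              ≤ ∑ k ∈ Ioc (15 * 2^m) (16 * 2^m), (a k + ∑ i ∈ range m, a (2 ^ i)) :=
            Finset.sum_le_sum hpt
          rw [Finset.sum_const, hcardB, Finset.sum_add_distrib, Finset.sum_const, hcardB,
            nsmul_eq_mul, nsmul_eq_mul] at h1
          push_cast at h1 ⊢
          linarith
        have hak : ∀ k ∈ Ioc (15 * 2^m) (16 * 2^m),
            a k ≤ s ^ (3 * (4+m)) * (a k / (k:ℝ)^((3:ℝ)/2)) := by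
          intro k hk
          rw [Finset.mem_Ioc] at hk
          have hk1 : 1 ≤ k := by omega
          have hkpos := hpow_pos k hk1
          have hkle : ((k:ℕ):ℝ)^((3:ℝ)/2) ≤ s ^ (3 * (4+m)) := by
            rw [← hb3 (4+m)]
            refine Real.rpow_le_rpow (Nat.cast_nonneg _) ?_ (by norm_num)
            exact_mod_cast h16 ▸ hk.2
          calc a k = (a k / (k:ℝ)^((3:ℝ)/2)) * (k:ℝ)^((3:ℝ)/2) := by field_simp
            _ ≤ (a k / (k:ℝ)^((3:ℝ)/2)) * s^(3*(4+m)) :=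
                mul_le_mul_of_nonneg_left hkle (htnn k)
            _ = s^(3*(4+m)) * (a k / (k:ℝ)^((3:ℝ)/2)) := by ring
        have hsumB2 : ∑ k ∈ Ioc (15 * 2^m) (16 * 2^m), a k
            ≤ s ^ (3*(4+m)) * ∑ k ∈ Ioc (15 * 2^m) (16 * 2^m), a k / (k:ℝ)^((3:ℝ)/2) := by
          rw [Finset.mul_sum]; exact Finset.sum_le_sum hak
        have hP : s ^ (3*(4+m)) = 16 * 2 ^ m * s ^ (4+m) := by
          rw [show 3*(4+m) = 2*(4+m) + (4+m) by ring, pow_add, pow_mul, hs2, pow_add]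
          norm_num
        have hspos : (0:ℝ) < s ^ (4+m) := pow_pos hs0 _
        have h2mpos : (0:ℝ) < (2:ℝ) ^ m := by positivity
        have hTBnn : 0 ≤ ∑ k ∈ Ioc (15 * 2^m) (16 * 2^m), a k / (k:ℝ)^((3:ℝ)/2) :=
          Finset.sum_nonneg fun k _ => htnn k
        have h1 : (2:ℝ)^m * a (2^(4+m))
            ≤ (2:ℝ)^m * (16 * s^(4+m) * (∑ k ∈ Ioc (15 * 2^m) (16 * 2^m), a k / (k:ℝ)^((3:ℝ)/2))
              + ∑ i ∈ range m, a (2 ^ i)) := by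
          have := hP ▸ hsumB2
          nlinarith
        have h2 : a (2^(4+m)) ≤ 16 * s^(4+m) * (∑ k ∈ Ioc (15 * 2^m) (16 * 2^m), a k / (k:ℝ)^((3:ℝ)/2))
            + ∑ i ∈ range m, a (2 ^ i) := (mul_le_mul_iff_right₀ h2mpos).mp h1
        have hq4m : q ^ 4 * q ^ m = (s ^ (4+m))⁻¹ := by
          rw [← pow_add, hq_def, inv_pow]
        calc q^(4+m) * a (2^(4+m))
            ≤ q^(4+m) * (16 * s^(4+m) * (∑ k ∈ Ioc (15 * 2^m) (16 * 2^m), a k / (k:ℝ)^((3:ℝ)/2))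
              + ∑ i ∈ range m, a (2 ^ i)) :=
              mul_le_mul_of_nonneg_left h2 (pow_nonneg hq0.le _)
          _ = 16 * (∑ k ∈ Ioc (15 * 2^m) (16 * 2^m), a k / (k:ℝ)^((3:ℝ)/2))
              + q ^ 4 * (q ^ m * ∑ i ∈ range m, a (2 ^ i)) := by
              have hqm : q ^ (4+m) = (s ^ (4+m))⁻¹ := by rw [hq_def, inv_pow]
              rw [hqm, ← mul_assoc, hq4m]
              field_simp
      -- sum the blocks
      have hdisj : ((range (r-4) : Finset ℕ) : Set ℕ).PairwiseDisjoint
          (fun m => Ioc (15 * 2^m) (16 * 2^m) : ℕ → Finset ℕ) := by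
        intro i _ j _ hij
        have key : ∀ x y : ℕ, x < y →
            Disjoint (Ioc (15 * 2^x) (16 * 2^x)) (Ioc (15 * 2^y) (16 * 2^y)) := by
          intro x y hxy
          rw [Finset.disjoint_left]
          intro k hk1 hk2
          rw [Finset.mem_Ioc] at hk1 hk2
          have h2 : 2 ^ x * 2 ≤ 2 ^ y := by
            have := Nat.pow_le_pow_right (show 1 ≤ 2 by norm_num) (show x + 1 ≤ y by omega)
            rw [pow_succ] at this; omega
          omega
        rcases Nat.lt_or_ge i j with h | h
        · exact key i j h
        · exact (key j i (by omega)).symm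
      have hbiu : ∑ m ∈ range (r-4), (∑ k ∈ Ioc (15 * 2^m) (16 * 2^m), a k / (k:ℝ)^((3:ℝ)/2))
          = ∑ k ∈ (range (r-4)).biUnion (fun m => Ioc (15 * 2^m) (16 * 2^m)),
              a k / (k:ℝ)^((3:ℝ)/2) := (Finset.sum_biUnion hdisj).symm
      have hsubset : (range (r-4)).biUnion (fun m => Ioc (15 * 2^m) (16 * 2^m)) ⊆ Icc 1 n := by
        intro k hk
        rw [Finset.mem_biUnion] at hk
        obtain ⟨m, hm, hk⟩ := hk
        rw [Finset.mem_range] at hm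
        rw [Finset.mem_Ioc] at hk
        rw [Finset.mem_Icc]
        have honepow : (1:ℕ) ≤ 2 ^ m := Nat.one_le_two_pow
        have h16 : 16 * 2 ^ m = 2 ^ (4 + m) := by rw [pow_add]; norm_num
        have hle : 2 ^ (4 + m) ≤ 2 ^ (r-1) :=
          Nat.pow_le_pow_right (by norm_num) (by omega)
        omega
      have hpart1 : ∑ m ∈ range (r-4), (∑ k ∈ Ioc (15 * 2^m) (16 * 2^m), a k / (k:ℝ)^((3:ℝ)/2)) ≤ A := by
        rw [hbiu]
        exact Finset.sum_le_sum_of_subset_of_nonneg hsubset fun k _ _ => htnn k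
      have hswap := swap_le (fun i => a (2 ^ i)) (fun i => hnn _) q hq0.le hq1 (r-4)
      have hDM : ∑ i ∈ range (r-4), q ^ i * a (2 ^ i) ≤ D :=
        Finset.sum_le_sum_of_subset_of_nonneg (Finset.range_subset_range.mpr (by omega))
          fun i _ _ => mul_nonneg (pow_nonneg hq0.le _) (hnn _)
      have hpart2 : ∑ m ∈ range (r-4), q ^ 4 * (q ^ m * ∑ i ∈ range m, a (2 ^ i))
          ≤ q ^ 4 * (q * (1-q)⁻¹ * D) := by
        have h1q : (0:ℝ) < 1 - q := by linarith
        have hchain : ∑ m ∈ range (r-4), q ^ m * (∑ i ∈ range m, a (2 ^ i))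
            ≤ q * (1-q)⁻¹ * D := by
          refine le_trans (by simpa using hswap) ?_
          exact mul_le_mul_of_nonneg_left hDM (by positivity)
        calc ∑ m ∈ range (r-4), q ^ 4 * (q ^ m * ∑ i ∈ range m, a (2 ^ i))
            = q ^ 4 * ∑ m ∈ range (r-4), q ^ m * (∑ i ∈ range m, a (2 ^ i)) := by
              rw [Finset.mul_sum]
          _ ≤ q ^ 4 * (q * (1-q)⁻¹ * D) :=
              mul_le_mul_of_nonneg_left hchain (pow_nonneg hq0.le 4)
      have htail : ∑ m ∈ range (r-4), q ^ (4+m) * a (2 ^ (4+m))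
          ≤ 16 * A + q ^ 4 * (q * (1-q)⁻¹ * D) := by
        have h1 : ∑ m ∈ range (r-4), q ^ (4+m) * a (2 ^ (4+m))
            ≤ ∑ m ∈ range (r-4), (16 * (∑ k ∈ Ioc (15 * 2^m) (16 * 2^m), a k / (k:ℝ)^((3:ℝ)/2))
              + q ^ 4 * (q ^ m * ∑ i ∈ range m, a (2 ^ i))) :=
          Finset.sum_le_sum fun m _ => hblock m
        rw [Finset.sum_add_distrib] at h1
        have h2 : ∑ m ∈ range (r-4), 16 * (∑ k ∈ Ioc (15 * 2^m) (16 * 2^m), a k / (k:ℝ)^((3:ℝ)/2))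
            = 16 * ∑ m ∈ range (r-4), (∑ k ∈ Ioc (15 * 2^m) (16 * 2^m), a k / (k:ℝ)^((3:ℝ)/2)) := by
          rw [Finset.mul_sum]
        rw [h2] at h1
        nlinarith
      have hθ : q ^ 4 * (q * (1-q)⁻¹) ≤ 61/100 := by
        rw [hKval]
        have hs4 : s ^ 4 = 4 := by
          rw [show (4:ℕ) = 2*2 by norm_num, pow_mul, hs2]; norm_num
        have hq4 : q ^ 4 = 1/4 := by rw [hq_def, inv_pow, hs4]; norm_num
        have hinv : s⁻¹ = s / 2 := by
          rw [eq_div_iff (by norm_num : (2:ℝ) ≠ 0)]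
          nlinarith
        rw [hq4, hq_def, hinv]
        nlinarith
      have hθD : q ^ 4 * (q * (1-q)⁻¹ * D) ≤ (61/100) * D := by
        have he : q ^ 4 * (q * (1-q)⁻¹ * D) = (q ^ 4 * (q * (1-q)⁻¹)) * D := by ring
        rw [he]
        exact mul_le_mul_of_nonneg_right hθ hDnn
      have hfin : D ≤ 92 * A + 16 * A + (61/100) * D := by
        rw [hsplitD] at *
        linarith
      linarith

open MeasureTheory Finset

private lemma myCondexpL2_le {Ω : Type*} {m mΩ : MeasurableSpace Ω} {μ : Measure Ω}
    [IsFiniteMeasure μ] (hm : m ≤ mΩ) (f : Ω → ℝ) (hf : MemLp f 2 μ) :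
    eLpNorm (μ[f|m]) 2 μ ≤ eLpNorm f 2 μ := by
  have hint : Integrable f μ := hf.integrable one_le_two
  set F : Lp ℝ 2 μ := hf.toLp f with hF
  have h_ae : ((condExpL2 ℝ ℝ hm F : lpMeas ℝ ℝ m 2 μ) : Ω → ℝ) =ᵐ[μ] μ[f|m] := by
    refine ae_eq_condExp_of_forall_setIntegral_eq hm hint ?_ ?_ ?_
    · exact fun s _ _ => (integrable_condExpL2_of_isFiniteMeasure hm).integrableOn
    · intro t ht hμt
      rw [integral_condExpL2_eq hm F ht hμt.ne]
      exact setIntegral_congr_ae (hm t ht) ((hf.coeFn_toLp).mono fun x hx _ => hx)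
    · exact lpMeas.aestronglyMeasurable _
  calc eLpNorm (μ[f|m]) 2 μ
      = eLpNorm (((condExpL2 ℝ ℝ hm F : lpMeas ℝ ℝ m 2 μ)) : Ω → ℝ) 2 μ :=
        (eLpNorm_congr_ae h_ae).symm
    _ ≤ eLpNorm (F : Ω → ℝ) 2 μ := eLpNorm_condExpL2_le hm F
    _ = eLpNorm f 2 μ := eLpNorm_congr_ae hf.coeFn_toLp

private lemma myCondexpComp {Ω : Type*} {m mΩ : MeasurableSpace Ω} {μ : Measure Ω}
    [IsFiniteMeasure μ] (hm : m ≤ mΩ) (f : Ω → Ω)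
    (hf : MeasurePreserving f μ μ) (g : Ω → ℝ) (hg : Integrable g μ) :
    μ[g ∘ f | MeasurableSpace.comap f m] =ᵐ[μ] (μ[g|m]) ∘ f := by
  have hm' : MeasurableSpace.comap f m ≤ mΩ := by
    rintro s ⟨t, ht, rfl⟩
    exact hf.measurable (hm t ht)
  have key : ∀ (u : Ω → ℝ), Integrable u μ → ∀ t : Set Ω, MeasurableSet t →
      ∫ x in f ⁻¹' t, u (f x) ∂μ = ∫ x in t, u x ∂μ := by
    intro u hu t ht
    have h1 : MeasurePreserving f (μ.restrict (f ⁻¹' t)) (μ.restrict t) :=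
      hf.restrict_preimage ht
    have h2 : ∫ y, u y ∂(Measure.map f (μ.restrict (f ⁻¹' t)))
        = ∫ x, u (f x) ∂(μ.restrict (f ⁻¹' t)) :=
      integral_map h1.measurable.aemeasurable
        (by rw [h1.map_eq]; exact hu.aestronglyMeasurable.restrict)
    calc ∫ x in f ⁻¹' t, u (f x) ∂μ
        = ∫ y, u y ∂(Measure.map f (μ.restrict (f ⁻¹' t))) := h2.symm
      _ = ∫ x in t, u x ∂μ := by rw [h1.map_eq]
  have hgf : Integrable (g ∘ f) μ :=
    ((memLp_one_iff_integrable.mpr hg).comp_measurePreserving hf).integrable le_rfl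
  refine (ae_eq_condExp_of_forall_setIntegral_eq hm' hgf ?_ ?_ ?_).symm
  · intro s _ _
    exact (((memLp_one_iff_integrable.mpr integrable_condExp).comp_measurePreserving
      hf).integrable le_rfl).integrableOn
  · rintro s ⟨t, ht, rfl⟩ _
    have htm : MeasurableSet t := hm t ht
    calc ∫ x in f ⁻¹' t, ((μ[g|m]) ∘ f) x ∂μ = ∫ x in t, (μ[g|m]) x ∂μ :=
          key _ integrable_condExp t htm
      _ = ∫ x in t, g x ∂μ := setIntegral_condExp hm hg ht
      _ = ∫ x in f ⁻¹' t, (g ∘ f) x ∂μ := (key g hg t htm).symm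
  · refine StronglyMeasurable.aestronglyMeasurable ?_
    exact stronglyMeasurable_condExp.comp_measurable (Measurable.of_comap_le le_rfl)
private lemma mySubadd {Ω : Type*} {F0 mΩ : MeasurableSpace Ω} (μ : Measure Ω)
    [IsProbabilityMeasure μ] (T : Ω → Ω) (hT : MeasurePreserving T μ μ)
    (hF0 : F0 ≤ mΩ) (hF0T : F0 ≤ F0.comap T)
    (X : ℕ → Ω → ℝ) (hXdef : ∀ i ω, X i ω = X 0 (T^[i] ω)) (hX2 : MemLp (X 0) 2 μ)
    (S : ℕ → Ω → ℝ) (hS : ∀ n ω, S n ω = ∑ k ∈ Finset.Icc 1 n, X k ω) :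
    ∀ b c : ℕ, (eLpNorm (μ[S (b+c)|F0]) 2 μ).toReal
      ≤ (eLpNorm (μ[S b|F0]) 2 μ).toReal + (eLpNorm (μ[S c|F0]) 2 μ).toReal := by
  have hXmem : ∀ i, MemLp (X i) 2 μ := by
    intro i
    have hXi : X i = (X 0) ∘ (T^[i]) := funext fun ω => hXdef i ω
    rw [hXi]
    exact hX2.comp_measurePreserving (hT.iterate i)
  have hSmem : ∀ n, MemLp (S n) 2 μ := by
    intro n
    have hSn : S n = fun ω => ∑ k ∈ Finset.Icc 1 n, X k ω := funext fun ω => hS n ω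
    rw [hSn]
    exact memLp_finsetSum _ fun k _ => hXmem k
  have hSint : ∀ n, Integrable (S n) μ := fun n => (hSmem n).integrable one_le_two
  have hIccIoc : ∀ m : ℕ, Finset.Icc 1 m = Finset.Ioc 0 m := by
    intro m; ext x; simp only [Finset.mem_Icc, Finset.mem_Ioc]; omega
  have hRS : ∀ b c : ℕ, ∀ ω, S (b+c) ω = S b ω + S c (T^[b] ω) := by
    intro b c ω
    rw [hS, hS, hS]
    have h1 : ∑ k ∈ Finset.Icc 1 (b+c), X k ω
        = ∑ k ∈ Finset.Icc 1 b, X k ω + ∑ k ∈ Finset.Ioc b (b+c), X k ω := by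
      rw [hIccIoc, hIccIoc, Finset.sum_Ioc_consecutive _ (Nat.zero_le b) (Nat.le_add_right b c)]
    rw [h1]
    congr 1
    have hL : ∑ k ∈ Finset.Ioc b (b+c), X k ω = ∑ i ∈ Finset.range c, X 0 (T^[b+1+i] ω) := by
      have he : Finset.Ioc b (b+c) = Finset.Ico (b+1) (b+c+1) := by
        ext x; simp only [Finset.mem_Ioc, Finset.mem_Ico]; omega
      rw [he, Finset.sum_Ico_eq_sum_range]
      have hc : b + c + 1 - (b+1) = c := by omega
      rw [hc]
      exact Finset.sum_congr rfl fun i _ => hXdef (b+1+i) ω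
    have hR : ∑ k ∈ Finset.Icc 1 c, X k (T^[b] ω) = ∑ i ∈ Finset.range c, X 0 (T^[b+1+i] ω) := by
      have he : Finset.Icc 1 c = Finset.Ico 1 (c+1) := by
        ext x; simp only [Finset.mem_Icc, Finset.mem_Ico]; omega
      rw [he, Finset.sum_Ico_eq_sum_range]
      have hc : c + 1 - 1 = c := by omega
      rw [hc]
      refine Finset.sum_congr rfl fun i _ => ?_
      rw [hXdef (1+i) (T^[b] ω), ← Function.iterate_add_apply]
      have he2 : 1 + i + b = b + 1 + i := by omega
      rw [he2]
    rw [hL, hR]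
  intro b c
  have hRc : MemLp ((S c) ∘ (T^[b])) 2 μ := (hSmem c).comp_measurePreserving (hT.iterate b)
  have hRcint : Integrable ((S c) ∘ (T^[b])) μ := hRc.integrable one_le_two
  have hadd : μ[S (b+c)|F0] =ᵐ[μ] μ[S b|F0] + μ[(S c) ∘ (T^[b])|F0] := by
    have he : S (b+c) = S b + (S c) ∘ (T^[b]) := funext fun ω => hRS b c ω
    rw [he]
    exact condExp_add (hSint b) hRcint _
  have hmea : ∀ g : Ω → ℝ, AEStronglyMeasurable (μ[g|F0]) μ :=
    fun g => (stronglyMeasurable_condExp.mono hF0).aestronglyMeasurable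
  have htri : eLpNorm (μ[S (b+c)|F0]) 2 μ
      ≤ eLpNorm (μ[S b|F0]) 2 μ + eLpNorm (μ[(S c) ∘ (T^[b])|F0]) 2 μ := by
    rw [eLpNorm_congr_ae hadd]
    exact eLpNorm_add_le (hmea _) (hmea _) one_le_two
  have hF0G : F0 ≤ MeasurableSpace.comap (T^[b]) F0 := by
    have hcomap : ∀ k : ℕ, F0 ≤ MeasurableSpace.comap (T^[k]) F0 := by
      intro k
      induction k with
      | zero =>
        rw [Function.iterate_zero]
        exact le_of_eq (MeasurableSpace.comap_id).symm
      | succ k ih =>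
        rw [Function.iterate_succ, ← MeasurableSpace.comap_comp]
        calc F0 ≤ F0.comap T := hF0T
          _ ≤ (F0.comap (T^[k])).comap T := MeasurableSpace.comap_mono ih
    exact hcomap b
  have hGm : MeasurableSpace.comap (T^[b]) F0 ≤ mΩ := by
    rintro s ⟨t, ht, rfl⟩
    exact ((hT.iterate b).measurable) (hF0 t ht)
  have htower : μ[(S c) ∘ (T^[b])|F0]
      =ᵐ[μ] condExp F0 μ (μ[(S c) ∘ (T^[b])|MeasurableSpace.comap (T^[b]) F0]) :=
    (condExp_condExp_of_le hF0G hGm).symm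
  have hcomp : μ[(S c) ∘ (T^[b])|MeasurableSpace.comap (T^[b]) F0]
      =ᵐ[μ] (μ[S c|F0]) ∘ (T^[b]) :=
    myCondexpComp hF0 (T^[b]) (hT.iterate b) (S c) (hSint c)
  have hcomb : μ[(S c) ∘ (T^[b])|F0] =ᵐ[μ] μ[(μ[S c|F0]) ∘ (T^[b])|F0] :=
    htower.trans (condExp_congr_ae hcomp)
  have hcondL2 : MemLp (μ[S c|F0]) 2 μ :=
    ⟨(stronglyMeasurable_condExp.mono hF0).aestronglyMeasurable,
      lt_of_le_of_lt (myCondexpL2_le hF0 _ (hSmem c)) (hSmem c).2⟩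
  have hcompmem : MemLp ((μ[S c|F0]) ∘ (T^[b])) 2 μ :=
    hcondL2.comp_measurePreserving (hT.iterate b)
  have hkey : eLpNorm (μ[(S c) ∘ (T^[b])|F0]) 2 μ ≤ eLpNorm (μ[S c|F0]) 2 μ := by
    rw [eLpNorm_congr_ae hcomb]
    calc eLpNorm (μ[(μ[S c|F0]) ∘ (T^[b])|F0]) 2 μ
        ≤ eLpNorm ((μ[S c|F0]) ∘ (T^[b])) 2 μ := myCondexpL2_le hF0 _ hcompmem
      _ = eLpNorm (μ[S c|F0]) 2 μ := eLpNorm_comp_measurePreserving (hmea _) (hT.iterate b)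
  have hfb : eLpNorm (μ[S b|F0]) 2 μ ≠ ⊤ :=
    (lt_of_le_of_lt (myCondexpL2_le hF0 _ (hSmem b)) (hSmem b).2).ne
  have hfc : eLpNorm (μ[S c|F0]) 2 μ ≠ ⊤ :=
    (lt_of_le_of_lt (myCondexpL2_le hF0 _ (hSmem c)) (hSmem c).2).ne
  have hfRc : eLpNorm (μ[(S c) ∘ (T^[b])|F0]) 2 μ ≠ ⊤ :=
    (lt_of_le_of_lt hkey (lt_top_iff_ne_top.mpr hfc)).ne
  calc (eLpNorm (μ[S (b+c)|F0]) 2 μ).toReal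
      ≤ ((eLpNorm (μ[S b|F0]) 2 μ) + eLpNorm (μ[(S c) ∘ (T^[b])|F0]) 2 μ).toReal :=
        ENNReal.toReal_mono (ENNReal.add_ne_top.mpr ⟨hfb, hfRc⟩) htri
    _ = (eLpNorm (μ[S b|F0]) 2 μ).toReal + (eLpNorm (μ[(S c) ∘ (T^[b])|F0]) 2 μ).toReal :=
        ENNReal.toReal_add hfb hfRc
    _ ≤ (eLpNorm (μ[S b|F0]) 2 μ).toReal + (eLpNorm (μ[S c|F0]) 2 μ).toReal :=
        add_le_add_right (ENNReal.toReal_mono hfc hkey) _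
/-- Equivalence of the dyadic condition (35) and condition (18), with two-sided comparison
constants (Lemma 3.3 of Peligrad–Utev). -/
theorem stmt10 {Ω : Type*} {mΩ : MeasurableSpace Ω} (μ : Measure Ω) [IsProbabilityMeasure μ]
    (T : Ω → Ω) (hT : MeasurePreserving T μ μ)
    (F0 : MeasurableSpace Ω) (hF0 : F0 ≤ mΩ) (hF0T : F0 ≤ F0.comap T)
    (X : ℕ → Ω → ℝ) (hXdef : ∀ i ω, X i ω = X 0 (T^[i] ω))
    (hX0 : StronglyMeasurable[F0] (X 0)) (hX2 : MemLp (X 0) 2 μ)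
    (hXc : ∫ ω, X 0 ω ∂μ = 0)
    (S : ℕ → Ω → ℝ) (hS : ∀ n ω, S n ω = ∑ k ∈ Finset.Icc 1 n, X k ω) :
    (Summable (fun j : ℕ =>
        (eLpNorm (μ[S (2 ^ j) | F0]) 2 μ).toReal / (2 : ℝ) ^ ((j : ℝ) / 2)) ↔
      Summable (fun n : ℕ =>
        (eLpNorm (μ[S (n + 1) | F0]) 2 μ).toReal / ((n : ℝ) + 1) ^ ((3 : ℝ) / 2))) ∧
    (∃ C₁ C₂ : ℝ, 0 < C₁ ∧ 0 < C₂ ∧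
      ∀ r n : ℕ, 1 ≤ r → 2 ^ (r - 1) < n → n ≤ 2 ^ r →
        C₁ * ∑ j ∈ Finset.Icc 1 n,
            (eLpNorm (μ[S j | F0]) 2 μ).toReal / (j : ℝ) ^ ((3 : ℝ) / 2) ≤
          ∑ j ∈ Finset.range r,
            (eLpNorm (μ[S (2 ^ j) | F0]) 2 μ).toReal / (2 : ℝ) ^ ((j : ℝ) / 2) ∧
        ∑ j ∈ Finset.range r,
            (eLpNorm (μ[S (2 ^ j) | F0]) 2 μ).toReal / (2 : ℝ) ^ ((j : ℝ) / 2) ≤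
          C₂ * ∑ j ∈ Finset.Icc 1 n,
            (eLpNorm (μ[S j | F0]) 2 μ).toReal / (j : ℝ) ^ ((3 : ℝ) / 2)) := by
  have hsubadd := mySubadd μ T hT hF0 hF0T X hXdef hX2 S hS
  have ha0 : (eLpNorm (μ[S 0|F0]) 2 μ).toReal = 0 := by
    have hz : S 0 = (0 : Ω → ℝ) := funext fun ω => by
      rw [hS]; simp
    rw [hz, condExp_zero, eLpNorm_zero]
    rfl
  have hcombFull := fun r n hr h1 h2 =>
    combMain (fun k => (eLpNorm (μ[S k|F0]) 2 μ).toReal) ha0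
      (fun k => ENNReal.toReal_nonneg) hsubadd r n hr h1 h2
  -- index shift between Icc 1 N and range N
  have hshift : ∀ N : ℕ, ∑ j ∈ Finset.Icc 1 N,
      (eLpNorm (μ[S j|F0]) 2 μ).toReal / (j:ℝ) ^ ((3:ℝ)/2)
      = ∑ m ∈ range N, (eLpNorm (μ[S (m+1)|F0]) 2 μ).toReal / ((m:ℝ)+1) ^ ((3:ℝ)/2) := by
    intro N
    induction N with
    | zero => simp
    | succ N ih =>
      rw [Finset.sum_Icc_succ_top (by omega : 1 ≤ N + 1), ih, Finset.sum_range_succ]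
      congr 2
      push_cast
      ring
  have hdnn : ∀ j : ℕ, 0 ≤ (eLpNorm (μ[S (2^j)|F0]) 2 μ).toReal / (2:ℝ) ^ ((j:ℝ)/2) :=
    fun j => div_nonneg ENNReal.toReal_nonneg (Real.rpow_nonneg (by norm_num) _)
  have htnn : ∀ m : ℕ, 0 ≤ (eLpNorm (μ[S (m+1)|F0]) 2 μ).toReal / ((m:ℝ)+1) ^ ((3:ℝ)/2) :=
    fun m => div_nonneg ENNReal.toReal_nonneg (Real.rpow_nonneg (by positivity) _)
  constructor
  · constructor
    · -- dyadic summable → full summable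
      intro h
      have htsum_nn : 0 ≤ ∑' j : ℕ, (eLpNorm (μ[S (2^j)|F0]) 2 μ).toReal / (2:ℝ) ^ ((j:ℝ)/2) :=
        tsum_nonneg hdnn
      refine summable_of_sum_range_le (c := 8 * ∑' j : ℕ,
        (eLpNorm (μ[S (2^j)|F0]) 2 μ).toReal / (2:ℝ) ^ ((j:ℝ)/2)) htnn ?_
      intro N
      rcases Nat.eq_zero_or_pos N with hN | hN
      · subst hN; simp; linarith
      have hc := (hcombFull N (2^N) hN (Nat.pow_lt_pow_right one_lt_two (by omega))
        le_rfl).1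
      have hmono : ∑ j ∈ Finset.Icc 1 N,
          (eLpNorm (μ[S j|F0]) 2 μ).toReal / (j:ℝ) ^ ((3:ℝ)/2)
          ≤ ∑ j ∈ Finset.Icc 1 (2^N),
            (eLpNorm (μ[S j|F0]) 2 μ).toReal / (j:ℝ) ^ ((3:ℝ)/2) :=
        Finset.sum_le_sum_of_subset_of_nonneg
          (Finset.Icc_subset_Icc_right (le_of_lt (Nat.lt_two_pow_self (n := N))))
          (fun j _ _ => div_nonneg ENNReal.toReal_nonneg (Real.rpow_nonneg (Nat.cast_nonneg j) _))
      have hD : ∑ j ∈ range N, (eLpNorm (μ[S (2^j)|F0]) 2 μ).toReal / (2:ℝ) ^ ((j:ℝ)/2)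
          ≤ ∑' j : ℕ, (eLpNorm (μ[S (2^j)|F0]) 2 μ).toReal / (2:ℝ) ^ ((j:ℝ)/2) :=
        Summable.sum_le_tsum (range N) (fun j _ => hdnn j) h
      rw [← hshift N]
      linarith
    · -- full summable → dyadic summable
      intro h
      have htsum_nn : 0 ≤ ∑' m : ℕ, (eLpNorm (μ[S (m+1)|F0]) 2 μ).toReal / ((m:ℝ)+1) ^ ((3:ℝ)/2) :=
        tsum_nonneg htnn
      refine summable_of_sum_range_le (c := 300 * ∑' m : ℕ,
        (eLpNorm (μ[S (m+1)|F0]) 2 μ).toReal / ((m:ℝ)+1) ^ ((3:ℝ)/2)) hdnn ?_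
      intro r
      rcases Nat.eq_zero_or_pos r with hr | hr
      · subst hr; simp; linarith
      have hc := (hcombFull r (2^r) hr (Nat.pow_lt_pow_right one_lt_two (by omega))
        le_rfl).2
      have hA : ∑ j ∈ Finset.Icc 1 (2^r),
          (eLpNorm (μ[S j|F0]) 2 μ).toReal / (j:ℝ) ^ ((3:ℝ)/2)
          ≤ ∑' m : ℕ, (eLpNorm (μ[S (m+1)|F0]) 2 μ).toReal / ((m:ℝ)+1) ^ ((3:ℝ)/2) := by
        rw [hshift (2^r)]
        exact Summable.sum_le_tsum (range (2^r)) (fun m _ => htnn m) h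
      linarith
  · exact ⟨1/8, 300, by norm_num, by norm_num, fun r n hr h1 h2 =>
      ⟨(hcombFull r n hr h1 h2).1, (hcombFull r n hr h1 h2).2⟩⟩
end

section
/- Let (ρ(n))_{n≥1} be the maximal correlation coefficients of a stationary centered L^2 sequence (X_k) with ∑_{k=1}^∞ ρ(2^k) < ∞, and suppose E(S_n^2) ≤ c^2 n for all n and some c > 0. Then ∑_{r=0}^∞ 2^{-r/2} ‖E(S_{2^r}|F_0)‖_2 ≤ 2‖X_1‖_2 + 4c ∑_{j=0}^∞ ρ(2^j) < ∞. -/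
open MeasureTheory Finset
open scoped ENNReal

section Aux
lemma condexp_L2_le' {α : Type*} {m m0 : MeasurableSpace α} {μ : Measure α} [IsFiniteMeasure μ]
    (hm : m ≤ m0) {f : α → ℝ} (hf : MemLp f 2 μ) :
    eLpNorm (μ[f|m]) 2 μ ≤ eLpNorm f 2 μ := by
  haveI : SigmaFinite (μ.trim hm) := by infer_instance
  have h1 : (condExpL2 ℝ ℝ hm (hf.toLp f) : α → ℝ) =ᵐ[μ] μ[f|m] := by
    refine ae_eq_condExp_of_forall_setIntegral_eq hm (hf.integrable one_le_two)
      (fun s hs hμs => integrableOn_condExpL2_of_measure_ne_top hm hμs.ne _)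
      (fun s hs hμs => ?_) (aestronglyMeasurable_condExpL2 hm _)
    exact (integral_condExpL2_eq hm (hf.toLp f) hs hμs.ne).trans
      (setIntegral_congr_ae (hm s hs) (hf.coeFn_toLp.mono fun x hx _ => hx))
  calc eLpNorm (μ[f|m]) 2 μ = eLpNorm (condExpL2 ℝ ℝ hm (hf.toLp f) : α → ℝ) 2 μ :=
        (eLpNorm_congr_ae h1).symm
    _ ≤ eLpNorm (hf.toLp f : α → ℝ) 2 μ := eLpNorm_condExpL2_le hm _
    _ = eLpNorm f 2 μ := eLpNorm_congr_ae hf.coeFn_toLp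

lemma eLpNorm_le_of_sq {α : Type*} {m0 : MeasurableSpace α} {μ : Measure α}
    {f : α → ℝ} (hf : MemLp f 2 μ) {C : ℝ} (hC : 0 ≤ C) (h : ∫ ω, f ω ^ 2 ∂μ ≤ C ^ 2) :
    eLpNorm f 2 μ ≤ ENNReal.ofReal C := by
  rw [hf.eLpNorm_eq_integral_rpow_norm two_ne_zero ENNReal.ofNat_ne_top,
    show (2 : ℝ≥0∞).toReal = 2 from by simp]
  apply ENNReal.ofReal_le_ofReal
  have hint : ∫ a, ‖f a‖ ^ (2:ℝ) ∂μ = ∫ a, f a ^ 2 ∂μ := by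
    refine integral_congr_ae (ae_of_all _ fun a => ?_)
    show ‖f a‖ ^ (2:ℝ) = f a ^ 2
    rw [show (2:ℝ) = ((2:ℕ):ℝ) from by norm_num, Real.rpow_natCast, Real.norm_eq_abs, sq_abs]
  have hnn : 0 ≤ ∫ a, ‖f a‖ ^ (2:ℝ) ∂μ :=
    integral_nonneg fun a => Real.rpow_nonneg (norm_nonneg _) _
  calc (∫ a, ‖f a‖ ^ (2:ℝ) ∂μ) ^ (2:ℝ)⁻¹ ≤ (C ^ 2) ^ (2:ℝ)⁻¹ :=
        Real.rpow_le_rpow hnn (hint ▸ h) (by norm_num)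
    _ = C := by
        rw [← Real.rpow_natCast C 2, ← Real.rpow_mul hC]; norm_num

lemma map_eq_eLpNorm_eq {Ω : Type*} {mΩ : MeasurableSpace Ω} {μ : Measure Ω}
    {T1 T2 : Ω → ℝ} (h1 : Measurable T1) (h2 : Measurable T2)
    (h : μ.map T1 = μ.map T2) : eLpNorm T1 2 μ = eLpNorm T2 2 μ := by
  have e1 : eLpNorm T1 2 μ = eLpNorm (id : ℝ → ℝ) 2 (μ.map T1) :=
    (eLpNorm_map_measure aestronglyMeasurable_id h1.aemeasurable).symm
  have e2 : eLpNorm T2 2 μ = eLpNorm (id : ℝ → ℝ) 2 (μ.map T2) :=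
    (eLpNorm_map_measure aestronglyMeasurable_id h2.aemeasurable).symm
  rw [e1, e2, h]

lemma law_sum_shift {Ω : Type*} {mΩ : MeasurableSpace Ω} (μ : Measure Ω)
    (X : ℤ → Ω → ℝ) (hXm : ∀ i, Measurable (X i))
    (hstat : ∀ (k : ℤ) (n : ℕ),
      μ.map (fun ω => fun i : Fin n => X (k + i) ω) =
        μ.map (fun ω => fun i : Fin n => X (i : ℤ) ω))
    (n : ℕ) (k : ℤ) :
    μ.map (fun ω => ∑ i : Fin n, X (k + i) ω) = μ.map (fun ω => ∑ i : Fin n, X (i:ℤ) ω) := by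
  have hg : Measurable (fun v : Fin n → ℝ => ∑ i, v i) :=
    Finset.measurable_sum _ fun i _ => measurable_pi_apply i
  have hv1 : Measurable (fun ω => fun i : Fin n => X (k + i) ω) :=
    measurable_pi_lambda _ fun i => hXm _
  have hv2 : Measurable (fun ω => fun i : Fin n => X (i:ℤ) ω) :=
    measurable_pi_lambda _ fun i => hXm _
  calc μ.map (fun ω => ∑ i : Fin n, X (k + i) ω)
      = (μ.map (fun ω => fun i : Fin n => X (k + i) ω)).map (fun v => ∑ i, v i) :=
        (Measure.map_map hg hv1).symm
    _ = (μ.map (fun ω => fun i : Fin n => X (i:ℤ) ω)).map (fun v => ∑ i, v i) := by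
        rw [hstat]
    _ = μ.map (fun ω => ∑ i : Fin n, X (i:ℤ) ω) := Measure.map_map hg hv2
end Aux

/-- For a stationary centered L² sequence with `∑ ρ(2^k) < ∞` and `E(S_n²) ≤ c² n`,
one has `∑_r 2^{-r/2} ‖E(S_{2^r}|F_0)‖₂ ≤ 2‖X_1‖₂ + 4c ∑_j ρ(2^j) < ∞`. -/
theorem stmt11 {Ω : Type*} {mΩ : MeasurableSpace Ω} (μ : Measure Ω) [IsProbabilityMeasure μ]
    (X : ℤ → Ω → ℝ) (hXm : ∀ i, Measurable (X i))
    (hstat : ∀ (k : ℤ) (n : ℕ),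
      μ.map (fun ω => fun i : Fin n => X (k + i) ω) =
        μ.map (fun ω => fun i : Fin n => X (i : ℤ) ω))
    (hXc : ∫ ω, X 0 ω ∂μ = 0) (hX2 : MemLp (X 0) 2 μ)
    (Fpast : ℤ → MeasurableSpace Ω)
    (hFpast : ∀ k : ℤ, Fpast k = ⨆ i ≤ k, MeasurableSpace.comap (X i) inferInstance)
    (ρ : ℕ → ℝ) (hρ0 : ∀ n, 0 ≤ ρ n)
    (hρ : ∀ n : ℕ, 1 ≤ n → ∀ Y : Ω → ℝ, MemLp Y 2 μ → (∫ ω, Y ω ∂μ) = 0 →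
      StronglyMeasurable[⨆ i ≥ (n : ℤ), MeasurableSpace.comap (X i) inferInstance] Y →
      eLpNorm (μ[Y | Fpast 0]) 2 μ ≤ ENNReal.ofReal (ρ n) * eLpNorm Y 2 μ)
    (hρsum : Summable (fun k : ℕ => ρ (2 ^ k)))
    (c : ℝ) (hc : 0 < c)
    (S : ℕ → Ω → ℝ) (hS : ∀ n ω, S n ω = ∑ k ∈ Finset.Icc 1 n, X (k : ℤ) ω)
    (hvar : ∀ n : ℕ, 1 ≤ n → ∫ ω, (S n ω) ^ 2 ∂μ ≤ c ^ 2 * n) :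
    ∑' r : ℕ, eLpNorm (μ[S (2 ^ r) | Fpast 0]) 2 μ / ENNReal.ofReal ((2 : ℝ) ^ ((r : ℝ) / 2))
      ≤ ENNReal.ofReal
          (2 * (eLpNorm (X 1) 2 μ).toReal + 4 * c * ∑' j : ℕ, ρ (2 ^ j)) := by
  classical
  have hle : Fpast 0 ≤ mΩ := by
    rw [hFpast]; exact iSup_le fun i => iSup_le fun _ => (hXm i).comap_le
  haveI : SigmaFinite (μ.trim hle) := inferInstance
  -- basic notation
  set T : ℕ → ℤ → Ω → ℝ := fun n k ω => ∑ i : Fin n, X (k + i) ω with hTdef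
  have hTm : ∀ n k, Measurable (T n k) := fun n k =>
    Finset.measurable_sum _ fun i _ => hXm _
  have hTlaw : ∀ n (k l : ℤ), μ.map (T n k) = μ.map (T n l) := fun n k l => by
    rw [law_sum_shift μ X hXm hstat n k, law_sum_shift μ X hXm hstat n l]
  have hTnorm : ∀ n (k l : ℤ), eLpNorm (T n k) 2 μ = eLpNorm (T n l) 2 μ := fun n k l =>
    map_eq_eLpNorm_eq (hTm n k) (hTm n l) (hTlaw n k l)
  -- each X k is in L2 with mean 0
  have hX1law : ∀ k : ℤ, μ.map (X k) = μ.map (X 0) := by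
    intro k
    have h := hTlaw 1 k 0
    have e : ∀ l : ℤ, T 1 l = X l := by
      intro l; funext ω
      simp [hTdef]
    rwa [e k, e 0] at h
  have hXk2 : ∀ k : ℤ, MemLp (X k) 2 μ :=
    fun k => ⟨(hXm k).aestronglyMeasurable, by
      rw [map_eq_eLpNorm_eq (hXm k) (hXm 0) (hX1law k)]; exact hX2.2⟩
  have hXkint : ∀ k : ℤ, ∫ ω, X k ω ∂μ = 0 := by
    intro k
    have e1 : ∫ ω, X k ω ∂μ = ∫ y, id y ∂(μ.map (X k)) :=
      (integral_map (hXm k).aemeasurable aestronglyMeasurable_id).symm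
    have e2 : ∫ ω, X 0 ω ∂μ = ∫ y, id y ∂(μ.map (X 0)) :=
      (integral_map (hXm 0).aemeasurable aestronglyMeasurable_id).symm
    rw [e1, hX1law k, ← e2, hXc]
  -- S basics
  have hSfun : ∀ n, S n = fun ω => ∑ k ∈ Finset.Icc 1 n, X (k : ℤ) ω := fun n => funext (hS n)
  have hS2 : ∀ n, MemLp (S n) 2 μ := by
    intro n; rw [hSfun]
    exact memLp_finset_sum _ fun k _ => hXk2 k
  have hSint : ∀ n, ∫ ω, S n ω ∂μ = 0 := by
    intro n
    have h1 : ∫ ω, S n ω ∂μ = ∑ k ∈ Finset.Icc 1 n, ∫ ω, X (k : ℤ) ω ∂μ := by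
      simp_rw [hS]
      exact integral_finset_sum _ fun k _ => (hXk2 k).integrable one_le_two
    rw [h1]; exact Finset.sum_eq_zero fun k _ => hXkint k
  have hST : ∀ n, S n = T n 1 := by
    intro n; funext ω
    rw [hS]
    show _ = ∑ i : Fin n, X (1 + (i : ℤ)) ω
    rw [← Finset.Ico_add_one_right_eq_Icc, Finset.sum_Ico_eq_sum_range,
      Fin.sum_univ_eq_sum_range (fun i => X (1 + (i : ℤ)) ω) n]
    simp only [Nat.succ_sub_one, Nat.add_sub_cancel]
    refine Finset.sum_congr rfl fun i _ => ?_
    push_cast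
    ring_nf
  have hDT : ∀ n, (fun ω => S (2 * n) ω - S n ω) = T n ((n : ℤ) + 1) := by
    intro n; funext ω
    rw [hS, hS]
    show _ = ∑ i : Fin n, X ((n : ℤ) + 1 + (i : ℤ)) ω
    have h1 : ∀ m : ℕ, Finset.Icc 1 m = Finset.Ioc 0 m := fun m => by
      ext x; simp only [Finset.mem_Icc, Finset.mem_Ioc]; omega
    have h2 : Finset.Ioc n (2 * n) = Finset.Icc (n + 1) (2 * n) := by
      ext x; simp only [Finset.mem_Icc, Finset.mem_Ioc]; omega
    rw [h1, h1, ← Finset.sum_Ioc_consecutive _ (Nat.zero_le n) (by omega : n ≤ 2 * n),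
      add_sub_cancel_left, h2, ← Finset.Ico_add_one_right_eq_Icc, Finset.sum_Ico_eq_sum_range,
      Fin.sum_univ_eq_sum_range (fun i => X ((n : ℤ) + 1 + (i : ℤ)) ω) n,
      show 2 * n + 1 - (n + 1) = n from by omega]
    refine Finset.sum_congr rfl fun i _ => ?_
    push_cast
    ring_nf
  have hSnorm : ∀ n : ℕ, 1 ≤ n → eLpNorm (S n) 2 μ ≤ ENNReal.ofReal (c * Real.sqrt n) := by
    intro n hn
    refine eLpNorm_le_of_sq (hS2 n) (by positivity) ?_
    calc ∫ ω, S n ω ^ 2 ∂μ ≤ c ^ 2 * n := hvar n hn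
      _ = (c * Real.sqrt n) ^ 2 := by
          rw [mul_pow, Real.sq_sqrt (by positivity)]
  -- the key recursion step
  have key : ∀ n : ℕ, 1 ≤ n →
      eLpNorm (μ[S (2 * n) | Fpast 0]) 2 μ ≤
        eLpNorm (μ[S n | Fpast 0]) 2 μ + ENNReal.ofReal (ρ n * (c * Real.sqrt n)) := by
    intro n hn
    set D : Ω → ℝ := fun ω => S (2 * n) ω - S n ω with hDdef
    have hD2 : MemLp D 2 μ := (hS2 (2 * n)).sub (hS2 n)
    have hDint : ∫ ω, D ω ∂μ = 0 := by
      rw [hDdef]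
      rw [integral_sub ((hS2 (2 * n)).integrable one_le_two) ((hS2 n).integrable one_le_two),
        hSint, hSint, sub_zero]
    have hDnorm : eLpNorm D 2 μ = eLpNorm (S n) 2 μ := by
      rw [hDdef, hDT n]
      conv_rhs => rw [hST n]
      exact hTnorm n _ _
    have hDmeas :
        StronglyMeasurable[⨆ i ≥ (n : ℤ), MeasurableSpace.comap (X i) inferInstance] D := by
      rw [hDdef, hDT n]
      refine Measurable.stronglyMeasurable ?_
      refine Finset.measurable_sum _ fun i _ => ?_
      refine Measurable.of_comap_le ?_
      refine le_iSup₂_of_le ((n : ℤ) + 1 + (i : ℤ)) (by omega) le_rfl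
    have hcondD : eLpNorm (μ[D | Fpast 0]) 2 μ ≤ ENNReal.ofReal (ρ n * (c * Real.sqrt n)) := by
      refine le_trans (hρ n hn D hD2 hDint hDmeas) ?_
      rw [hDnorm]
      calc ENNReal.ofReal (ρ n) * eLpNorm (S n) 2 μ
          ≤ ENNReal.ofReal (ρ n) * ENNReal.ofReal (c * Real.sqrt n) :=
            mul_le_mul_right (hSnorm n hn) _
        _ = ENNReal.ofReal (ρ n * (c * Real.sqrt n)) := (ENNReal.ofReal_mul (hρ0 n)).symm
    have hadd : μ[S (2 * n) | Fpast 0] =ᵐ[μ] μ[S n | Fpast 0] + μ[D | Fpast 0] := by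
      have hsplit : S (2 * n) = S n + D := by funext ω; simp [hDdef]
      rw [hsplit]
      exact condExp_add ((hS2 n).integrable one_le_two) (hD2.integrable one_le_two) _
    calc eLpNorm (μ[S (2 * n) | Fpast 0]) 2 μ
        = eLpNorm (μ[S n | Fpast 0] + μ[D | Fpast 0]) 2 μ := eLpNorm_congr_ae hadd
      _ ≤ eLpNorm (μ[S n | Fpast 0]) 2 μ + eLpNorm (μ[D | Fpast 0]) 2 μ :=
          eLpNorm_add_le (stronglyMeasurable_condExp.mono hle).aestronglyMeasurable
            (stronglyMeasurable_condExp.mono hle).aestronglyMeasurable one_le_two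
      _ ≤ _ := add_le_add_right hcondD _
  -- notation for the dyadic sequence
  set sq2 : ℝ := Real.sqrt 2 with hsq2def
  have hsq2pos : 0 < sq2 := Real.sqrt_pos.mpr (by norm_num)
  have hsq2sq : sq2 ^ 2 = 2 := Real.sq_sqrt (by norm_num)
  have hsq2gt1 : 1 < sq2 := by nlinarith
  set q : ℝ := sq2⁻¹ with hqdef
  have hq : 0 < q := inv_pos.mpr hsq2pos
  have hqlt1 : q < 1 := by
    rw [hqdef]
    rw [inv_lt_one_iff₀]
    right; exact hsq2gt1
  have hq1 : sq2 * q = 1 := mul_inv_cancel₀ (ne_of_gt hsq2pos)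
  set Q : ℝ≥0∞ := ENNReal.ofReal q with hQdef
  set A : ℕ → ℝ≥0∞ := fun r => eLpNorm (μ[S (2 ^ r) | Fpast 0]) 2 μ with hAdef
  set b : ℕ → ℝ≥0∞ := fun j => ENNReal.ofReal (ρ (2 ^ j) * (c * sq2 ^ j)) with hbdef
  have hrec : ∀ r, A (r + 1) ≤ A r + b r := by
    intro r
    have h2 : (2 : ℕ) ^ (r + 1) = 2 * 2 ^ r := by ring
    have h3 := key (2 ^ r) Nat.one_le_two_pow
    have h4 : Real.sqrt ((2 : ℕ) ^ r : ℕ) = sq2 ^ r := by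
      push_cast
      rw [show ((2:ℝ) ^ r) = (sq2 ^ r) ^ 2 from by rw [← pow_mul, mul_comm, pow_mul, hsq2sq]]
      exact Real.sqrt_sq (pow_nonneg hsq2pos.le r)
    rw [h4] at h3
    rw [hAdef]
    simpa [h2] using h3
  have hAbound : ∀ r, A r ≤ A 0 + ∑ j ∈ Finset.range r, b j := by
    intro r; induction r with
    | zero => simp
    | succ r ih =>
      calc A (r + 1) ≤ A r + b r := hrec r
        _ ≤ A 0 + ∑ j ∈ Finset.range r, b j + b r := add_le_add_left ih _
        _ = A 0 + ∑ j ∈ Finset.range (r + 1), b j := by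
            rw [Finset.sum_range_succ, add_assoc]
  -- bounds on A 0
  have hS1 : S 1 = X 1 := by funext ω; rw [hS]; simp
  have hX1norm : eLpNorm (X 1) 2 μ ≤ ENNReal.ofReal c := by
    refine eLpNorm_le_of_sq (hXk2 1) hc.le ?_
    have h := hvar 1 le_rfl
    rw [hS1] at h
    simpa using h
  have hA0a : A 0 ≤ eLpNorm (X 1) 2 μ := by
    rw [hAdef]
    simp only [pow_zero]
    rw [hS1]
    exact condexp_L2_le' hle (hXk2 1)
  have hA0b : A 0 ≤ ENNReal.ofReal (ρ 1 * c) := by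
    rw [hAdef]
    simp only [pow_zero]
    rw [hS1]
    have hX1meas :
        StronglyMeasurable[⨆ i ≥ ((1 : ℕ) : ℤ), MeasurableSpace.comap (X i) inferInstance]
          (X 1) := by
      refine Measurable.stronglyMeasurable (Measurable.of_comap_le ?_)
      exact le_iSup₂_of_le (1 : ℤ) (by norm_num) le_rfl
    refine le_trans (hρ 1 le_rfl (X 1) (hXk2 1) (hXkint 1) hX1meas) ?_
    calc ENNReal.ofReal (ρ 1) * eLpNorm (X 1) 2 μ
        ≤ ENNReal.ofReal (ρ 1) * ENNReal.ofReal c := mul_le_mul_right hX1norm _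
      _ = ENNReal.ofReal (ρ 1 * c) := (ENNReal.ofReal_mul (hρ0 1)).symm
  -- geometric facts
  have hQgeom : ∑' r : ℕ, Q ^ r = ENNReal.ofReal ((1 - q)⁻¹) := by
    rw [ENNReal.tsum_geometric]
    rw [ENNReal.ofReal_inv_of_pos (by linarith)]
    congr 1
    rw [ENNReal.ofReal_sub _ hq.le, ENNReal.ofReal_one]
  have hterm : ∀ r : ℕ,
      A r / ENNReal.ofReal ((2 : ℝ) ^ ((r : ℝ) / 2)) = A r * Q ^ r := by
    intro r
    have hw : (2 : ℝ) ^ ((r : ℝ) / 2) = sq2 ^ r := by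
      rw [hsq2def, Real.sqrt_eq_rpow, ← Real.rpow_natCast ((2:ℝ) ^ ((1:ℝ)/2)) r,
        ← Real.rpow_mul (by norm_num)]
      congr 1
      ring
    rw [div_eq_mul_inv, hw, ENNReal.ofReal_pow hsq2pos.le, ENNReal.inv_pow]
    congr 2
    rw [hQdef, hqdef, ENNReal.ofReal_inv_of_pos hsq2pos]
  -- double sum computation
  have hinner : ∀ j : ℕ, (∑' r : ℕ, if j < r then b j * Q ^ r else 0) =
      b j * Q ^ (j + 1) * ENNReal.ofReal ((1 - q)⁻¹) := by
    intro j
    have h3 := Summable.sum_add_tsum_nat_add' (f := fun r => if j < r then b j * Q ^ r else 0)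
      (k := j + 1) ENNReal.summable
    rw [← h3, Finset.sum_eq_zero (fun r hr => if_neg (by
      simp only [Finset.mem_range] at hr; omega)), zero_add]
    have h4 : ∀ i : ℕ, (if j < i + (j + 1) then b j * Q ^ (i + (j + 1)) else 0) =
        b j * Q ^ (j + 1) * Q ^ i := by
      intro i
      rw [if_pos (by omega), pow_add]
      ring
    rw [tsum_congr h4, ENNReal.tsum_mul_left, hQgeom]
  have hdouble : ∑' r : ℕ, ∑ j ∈ Finset.range r, b j * Q ^ r =
      ∑' j : ℕ, b j * Q ^ (j + 1) * ENNReal.ofReal ((1 - q)⁻¹) := by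
    have h1 : ∀ r : ℕ, ∑ j ∈ Finset.range r, b j * Q ^ r =
        ∑' j : ℕ, if j < r then b j * Q ^ r else 0 := by
      intro r
      rw [tsum_eq_sum (s := Finset.range r) (fun j hj => if_neg (by simpa using hj))]
      exact Finset.sum_congr rfl fun j hj => (if_pos (Finset.mem_range.mp hj)).symm
    rw [tsum_congr h1, ENNReal.tsum_comm]
    exact tsum_congr hinner
  have hbQ : ∀ j, b j * Q ^ (j + 1) = ENNReal.ofReal (c * q * ρ (2 ^ j)) := by
    intro j
    rw [hbdef, hQdef, ← ENNReal.ofReal_pow hq.le, ← ENNReal.ofReal_mul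
      (mul_nonneg (hρ0 _) (mul_nonneg hc.le (pow_nonneg hsq2pos.le _)))]
    congr 1
    have h5 : sq2 ^ j * q ^ (j + 1) = q := by
      calc sq2 ^ j * q ^ (j + 1) = (sq2 * q) ^ j * q := by
            rw [mul_pow, pow_succ]; ring
        _ = q := by rw [hq1, one_pow, one_mul]
    calc ρ (2 ^ j) * (c * sq2 ^ j) * q ^ (j + 1)
        = c * (sq2 ^ j * q ^ (j + 1)) * ρ (2 ^ j) := by ring
      _ = c * q * ρ (2 ^ j) := by rw [h5]
  -- sum everything
  set R : ℝ := ∑' j : ℕ, ρ (2 ^ j) with hRdef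
  have hRnn : 0 ≤ R := tsum_nonneg fun j => hρ0 _
  have hρ1R : ρ 1 ≤ R := by
    have := Summable.le_tsum hρsum 0 (fun j _ => hρ0 _)
    simpa using this
  have hsum2 : ∑' j : ℕ, b j * Q ^ (j + 1) * ENNReal.ofReal ((1 - q)⁻¹) =
      ENNReal.ofReal (c * q * R) * ENNReal.ofReal ((1 - q)⁻¹) := by
    rw [tsum_congr (fun j => by rw [hbQ j]), ENNReal.tsum_mul_right]
    congr 1
    rw [← ENNReal.ofReal_tsum_of_nonneg
      (fun j => mul_nonneg (mul_nonneg hc.le hq.le) (hρ0 _)) (hρsum.mul_left (c * q))]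
    congr 1
    rw [hRdef, tsum_mul_left]
  have hmain : (∑' r : ℕ, A r * Q ^ r) ≤
      (A 0 + ENNReal.ofReal (c * q * R)) * ENNReal.ofReal ((1 - q)⁻¹) := by
    calc ∑' r : ℕ, A r * Q ^ r
        ≤ ∑' r : ℕ, (A 0 * Q ^ r + ∑ j ∈ Finset.range r, b j * Q ^ r) := by
          refine ENNReal.tsum_le_tsum fun r => ?_
          calc A r * Q ^ r ≤ (A 0 + ∑ j ∈ Finset.range r, b j) * Q ^ r :=
                mul_le_mul_left (hAbound r) _
            _ = _ := by rw [add_mul, Finset.sum_mul]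
      _ = (∑' r : ℕ, A 0 * Q ^ r) + ∑' r : ℕ, ∑ j ∈ Finset.range r, b j * Q ^ r :=
          ENNReal.tsum_add
      _ = A 0 * ENNReal.ofReal ((1 - q)⁻¹) +
          ENNReal.ofReal (c * q * R) * ENNReal.ofReal ((1 - q)⁻¹) := by
          rw [ENNReal.tsum_mul_left, hQgeom, hdouble, hsum2]
      _ = _ := by rw [add_mul]
  -- final numeric assembly
  have hK : (1 - q)⁻¹ = 2 + sq2 := by
    refine inv_eq_of_mul_eq_one_left ?_
    have h6 : q * sq2 = 1 := by rw [mul_comm]; exact hq1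
    nlinarith [h6, hsq2sq]
  set N : ℝ := (eLpNorm (X 1) 2 μ).toReal with hNdef
  have hNeq : eLpNorm (X 1) 2 μ = ENNReal.ofReal N :=
    (ENNReal.ofReal_toReal (hXk2 1).2.ne).symm
  have hNnn : 0 ≤ N := ENNReal.toReal_nonneg
  have hA0K : A 0 * ENNReal.ofReal ((1 - q)⁻¹) ≤
      ENNReal.ofReal (2 * N + ρ 1 * c * sq2) := by
    rw [hK, ENNReal.ofReal_add (by norm_num) hsq2pos.le, mul_add]
    rw [ENNReal.ofReal_add (mul_nonneg (by norm_num) hNnn) (mul_nonneg (mul_nonneg (hρ0 1) hc.le) hsq2pos.le)]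
    refine add_le_add ?_ ?_
    · calc A 0 * ENNReal.ofReal 2 ≤ ENNReal.ofReal N * ENNReal.ofReal 2 :=
          mul_le_mul_left (hNeq ▸ hA0a) _
        _ = ENNReal.ofReal (2 * N) := by
          rw [← ENNReal.ofReal_mul hNnn, mul_comm]
    · calc A 0 * ENNReal.ofReal sq2 ≤ ENNReal.ofReal (ρ 1 * c) * ENNReal.ofReal sq2 :=
          mul_le_mul_left hA0b _
        _ = ENNReal.ofReal (ρ 1 * c * sq2) := by
          rw [← ENNReal.ofReal_mul (mul_nonneg (hρ0 1) hc.le)]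
  have hfinal : (A 0 + ENNReal.ofReal (c * q * R)) * ENNReal.ofReal ((1 - q)⁻¹) ≤
      ENNReal.ofReal (2 * N + 4 * c * R) := by
    rw [add_mul]
    calc A 0 * ENNReal.ofReal ((1 - q)⁻¹) +
          ENNReal.ofReal (c * q * R) * ENNReal.ofReal ((1 - q)⁻¹)
        ≤ ENNReal.ofReal (2 * N + ρ 1 * c * sq2) +
          ENNReal.ofReal (c * q * R * (1 - q)⁻¹) := by
          refine add_le_add hA0K ?_
          rw [← ENNReal.ofReal_mul (mul_nonneg (mul_nonneg hc.le hq.le) hRnn)]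
      _ = ENNReal.ofReal (2 * N + ρ 1 * c * sq2 + c * q * R * (1 - q)⁻¹) := by
          rw [← ENNReal.ofReal_add
            (add_nonneg (mul_nonneg (by norm_num) hNnn)
              (mul_nonneg (mul_nonneg (hρ0 1) hc.le) hsq2pos.le))
            (mul_nonneg (mul_nonneg (mul_nonneg hc.le hq.le) hRnn)
              (inv_nonneg.mpr (by linarith)))]
      _ ≤ ENNReal.ofReal (2 * N + 4 * c * R) := by
          refine ENNReal.ofReal_le_ofReal ?_
          have hqK : q * (1 - q)⁻¹ = sq2 + 1 := by
            rw [hK]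
            nlinarith [hq1, hsq2sq]
          have h7 : c * q * R * (1 - q)⁻¹ = c * (sq2 + 1) * R := by
            calc c * q * R * (1 - q)⁻¹ = c * (q * (1 - q)⁻¹) * R := by ring
              _ = c * (sq2 + 1) * R := by rw [hqK]
          rw [h7]
          have hsq15 : sq2 ≤ 1.5 := by nlinarith [sq_nonneg (sq2 - 1.5)]
          nlinarith [mul_le_mul_of_nonneg_left hρ1R (by nlinarith : (0:ℝ) ≤ (3 - 2 * sq2) * c),
            mul_nonneg (mul_nonneg (by linarith : (0:ℝ) ≤ 3 - 2 * sq2) hc.le) hRnn]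
  calc ∑' r : ℕ, eLpNorm (μ[S (2 ^ r) | Fpast 0]) 2 μ /
        ENNReal.ofReal ((2 : ℝ) ^ ((r : ℝ) / 2))
      = ∑' r : ℕ, A r * Q ^ r := tsum_congr hterm
    _ ≤ (A 0 + ENNReal.ofReal (c * q * R)) * ENNReal.ofReal ((1 - q)⁻¹) := hmain
    _ ≤ ENNReal.ofReal (2 * N + 4 * c * R) := hfinal
end
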